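/- arXiv:2312.04844 — 3 statements merged into one kernel-verified Lean document; each statement's English description precedes it below -/
import Mathlib

section
/- The monoid presented by generators E_1,…,E_{n−1} and Z_1,…,Z_{n−1} subject to the relations E_i² = E_i and E_i E_j = E_j E_i for all i,j; Z_i Z_j Z_i = Z_j Z_i Z_j for |i−j| = 1; Z_i Z_j = Z_j Z_i for |i−j| > 1; E_i Z_j = Z_j E_i for all i,j; Z_i² = E_i; and E_i Z_i = Z_i, is isomorphic to the boxed ramified monoid BR(S_n) via the map sending E_i ↦ e_i = (ê_i, id) and Z_i ↦ z_i = (ê_i, s_i). -/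
open scoped Classical

/-- The underlying type of the ramified symmetric monoid `R(S_n) = P_n ⋊ S_n`:
pairs of a set partition of `{1,…,n}` (an equivalence relation on `Fin n`)
and a permutation of `{1,…,n}`. -/
abbrev RS (n : ℕ) : Type := Setoid (Fin n) × Equiv.Perm (Fin n)

/-- The relabeling action `s · J` of a permutation on a set partition. -/
def permSetoid {n : ℕ} (s : Equiv.Perm (Fin n)) (J : Setoid (Fin n)) : Setoid (Fin n) :=
  Setoid.comap s.symm J

lemma permSetoid_rel {n : ℕ} (s : Equiv.Perm (Fin n)) (J : Setoid (Fin n)) (x y : Fin n) :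
    permSetoid s J x y ↔ J (s.symm x) (s.symm y) := Iff.rfl

/-- Relabeling by `s` as an order isomorphism of the lattice of set partitions. -/
def permOrderIso {n : ℕ} (s : Equiv.Perm (Fin n)) : Setoid (Fin n) ≃o Setoid (Fin n) where
  toFun := permSetoid s
  invFun := permSetoid s⁻¹
  left_inv J := Setoid.ext fun a b => by
    show J (s.symm (s⁻¹.symm a)) (s.symm (s⁻¹.symm b)) ↔ J a b
    simp [permSetoid, Setoid.comap_rel, Equiv.Perm.inv_def]
  right_inv J := Setoid.ext fun a b => by
    show J (s⁻¹.symm (s.symm a)) (s⁻¹.symm (s.symm b)) ↔ J a b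
    simp [permSetoid, Setoid.comap_rel, Equiv.Perm.inv_def]
  map_rel_iff' := by
    intro J K
    constructor
    · intro h a b hab
      have := @h (s a) (s b)
      simp only [permSetoid_rel, Equiv.symm_apply_apply] at this
      exact this hab
    · intro h a b hab
      exact h hab

lemma permSetoid_sup {n : ℕ} (s : Equiv.Perm (Fin n)) (J K : Setoid (Fin n)) :
    permSetoid s (J ⊔ K) = permSetoid s J ⊔ permSetoid s K :=
  (permOrderIso s).map_sup J K

lemma permSetoid_mul {n : ℕ} (s t : Equiv.Perm (Fin n)) (K : Setoid (Fin n)) :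
    permSetoid (s * t) K = permSetoid s (permSetoid t K) :=
  Setoid.ext fun _ _ => Iff.rfl

lemma permSetoid_one {n : ℕ} (K : Setoid (Fin n)) : permSetoid 1 K = K :=
  Setoid.ext fun _ _ => Iff.rfl

lemma permSetoid_bot {n : ℕ} (s : Equiv.Perm (Fin n)) : permSetoid s (⊥ : Setoid (Fin n)) = ⊥ :=
  Setoid.ext fun a b => by
    constructor
    · intro h
      have : s.symm a = s.symm b := h
      exact s.symm.injective this
    · rintro rfl; exact Setoid.refl' _ _

/-- The ramified symmetric monoid `R(S_n) = P_n ⋊ S_n`, with product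
`(I,s)(J,t) = (I ⊔ s·J, st)` and identity `(⊥, id)`. -/
instance RS.monoid (n : ℕ) : Monoid (RS n) where
  mul a b := (a.1 ⊔ permSetoid a.2 b.1, a.2 * b.2)
  one := (⊥, 1)
  one_mul a := by
    show ((⊥ : Setoid (Fin n)) ⊔ permSetoid 1 a.1, 1 * a.2) = a
    rw [permSetoid_one, bot_sup_eq, one_mul]
  mul_one a := by
    show (a.1 ⊔ permSetoid a.2 ⊥, a.2 * 1) = a
    rw [permSetoid_bot, sup_bot_eq, mul_one]
  mul_assoc a b c := by
    show ((a.1 ⊔ permSetoid a.2 b.1) ⊔ permSetoid (a.2 * b.2) c.1, a.2 * b.2 * c.2)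
      = (a.1 ⊔ permSetoid a.2 (b.1 ⊔ permSetoid b.2 c.1), a.2 * (b.2 * c.2))
    rw [permSetoid_mul, permSetoid_sup, sup_assoc, mul_assoc]

lemma RS.mul_def {n : ℕ} (a b : RS n) :
    a * b = (a.1 ⊔ permSetoid a.2 b.1, a.2 * b.2) := rfl

lemma RS.one_def {n : ℕ} : (1 : RS n) = (⊥, 1) := rfl

/-- A set partition of `{1,…,n}` is linear (convex) if all its blocks are intervals. -/
def IsLinear {n : ℕ} (R : Setoid (Fin n)) : Prop :=
  ∀ x y z : Fin n, x ≤ y → y ≤ z → R x z → R x y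

/-- `s` fixes every block of `R` setwise. -/
def FixesBlocks {n : ℕ} (s : Equiv.Perm (Fin n)) (R : Setoid (Fin n)) : Prop :=
  ∀ x : Fin n, s '' {y | R x y} = {y | R x y}

/-- The carrier of the boxed ramified monoid `BR(S_n)`: pairs `(I,s)` with `I`
linear and `s` fixing every block of `I` setwise. -/
def BRset (n : ℕ) : Set (RS n) := {p | IsLinear p.1 ∧ FixesBlocks p.2 p.1}

/-- The set partition of `{1,…,n}` whose unique non-singleton block is `{i,j}`. -/
def pairSetoid {n : ℕ} (i j : Fin n) : Setoid (Fin n) where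
  r x y := x = y ∨ (x = i ∧ y = j) ∨ (x = j ∧ y = i)
  iseqv := by
    constructor
    · intro x; left; rfl
    · intro x y h; rcases h with rfl | ⟨rfl, rfl⟩ | ⟨rfl, rfl⟩ <;> tauto
    · intro x y z hxy hyz
      rcases hxy with h1 | ⟨h1, h2⟩ | ⟨h1, h2⟩ <;>
        rcases hyz with h3 | ⟨h3, h4⟩ | ⟨h3, h4⟩ <;> subst_vars <;> tauto

/-- The generator `e_i = (ê_i, id)` of `BR(S_n)`, where `ê_i` is the linear partition
whose only non-singleton block is `{i, i+1}`. -/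
def eElt {n : ℕ} (i : Fin (n - 1)) : RS n :=
  (pairSetoid ⟨i.1, by omega⟩ ⟨i.1 + 1, by omega⟩, 1)

/-- The generator `z_i = (ê_i, s_i)` of `BR(S_n)`, where `s_i` is the transposition
`(i, i+1)`. -/
def zElt {n : ℕ} (i : Fin (n - 1)) : RS n :=
  (pairSetoid ⟨i.1, by omega⟩ ⟨i.1 + 1, by omega⟩,
    Equiv.swap ⟨i.1, by omega⟩ ⟨i.1 + 1, by omega⟩)

/-- Generators `E_1,…,E_{n−1}, Z_1,…,Z_{n−1}` for the presentation of `BR(S_n)`. -/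
inductive BRGen (n : ℕ) : Type
  | E : Fin (n - 1) → BRGen n
  | Z : Fin (n - 1) → BRGen n

namespace BRGen

/-- The defining relations of the presented monoid:
`E_i² = E_i`, `E_i E_j = E_j E_i`, `Z_i Z_j Z_i = Z_j Z_i Z_j` for `|i−j| = 1`,
`Z_i Z_j = Z_j Z_i` for `|i−j| > 1`, `E_i Z_j = Z_j E_i`, `Z_i² = E_i`, `E_i Z_i = Z_i`. -/
inductive Rel (n : ℕ) : FreeMonoid (BRGen n) → FreeMonoid (BRGen n) → Prop
  | esq (i : Fin (n - 1)) : Rel n (.of (E i) * .of (E i)) (.of (E i))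
  | ecomm (i j : Fin (n - 1)) : Rel n (.of (E i) * .of (E j)) (.of (E j) * .of (E i))
  | braid (i j : Fin (n - 1)) (h : Nat.dist i.1 j.1 = 1) :
      Rel n (.of (Z i) * .of (Z j) * .of (Z i)) (.of (Z j) * .of (Z i) * .of (Z j))
  | zcomm (i j : Fin (n - 1)) (h : 1 < Nat.dist i.1 j.1) :
      Rel n (.of (Z i) * .of (Z j)) (.of (Z j) * .of (Z i))
  | ezcomm (i j : Fin (n - 1)) : Rel n (.of (E i) * .of (Z j)) (.of (Z j) * .of (E i))
  | zsq (i : Fin (n - 1)) : Rel n (.of (Z i) * .of (Z i)) (.of (E i))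
  | ez (i : Fin (n - 1)) : Rel n (.of (E i) * .of (Z i)) (.of (Z i))

end BRGen




variable {n : ℕ}

/-- The relation of the linear partition with bond set `L`. -/
def PRel (n : ℕ) (L : Finset ℕ) (x y : Fin n) : Prop :=
  ∀ k : ℕ, min x.1 y.1 ≤ k → k < max x.1 y.1 → k ∈ L

lemma PRel.symm' {L : Finset ℕ} {x y : Fin n} (h : PRel n L x y) : PRel n L y x := by
  intro k h1 h2; exact h k (by omega) (by omega)

/-- The linear partition with bond set `L`. -/
def PSetoid (n : ℕ) (L : Finset ℕ) : Setoid (Fin n) where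
  r := PRel n L
  iseqv := by
    refine ⟨fun x => ?_, fun {x y} h => h.symm', fun {x y z} h1 h2 => ?_⟩
    · intro k h1 h2; omega
    · intro k hk1 hk2
      rcases (by omega : (min x.1 y.1 ≤ k ∧ k < max x.1 y.1) ∨
          (min y.1 z.1 ≤ k ∧ k < max y.1 z.1)) with ⟨a, b⟩ | ⟨a, b⟩
      · exact h1 k a b
      · exact h2 k a b

lemma PSetoid_rel (L : Finset ℕ) (x y : Fin n) : PSetoid n L x y ↔ PRel n L x y := Iff.rfl

lemma PSetoid_mono {L L' : Finset ℕ} (h : L ⊆ L') : PSetoid n L ≤ PSetoid n L' := by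
  rw [Setoid.le_def]
  intro x y hxy k h1 h2
  exact h (hxy k h1 h2)

lemma PSetoid_linear (L : Finset ℕ) : IsLinear (PSetoid n L) := by
  intro x y z hxy hyz h k h1 h2
  have hxy' : x.1 ≤ y.1 := hxy
  have hyz' : y.1 ≤ z.1 := hyz
  exact h k (by omega) (by omega)

lemma PSetoid_bond {L : Finset ℕ} {k : ℕ} (hk : k + 1 < n) (hmem : k ∈ L) :
    PSetoid n L ⟨k, by omega⟩ ⟨k + 1, hk⟩ := by
  intro j h1 h2
  simp only at h1 h2
  have : j = k := by omega
  exact this ▸ hmem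

lemma PSetoid_bond_iff {L : Finset ℕ} {k : ℕ} (hk : k + 1 < n) :
    PSetoid n L ⟨k, by omega⟩ ⟨k + 1, hk⟩ ↔ k ∈ L := by
  constructor
  · intro h
    have := h k (by simp) (by simp)
    exact this
  · exact PSetoid_bond hk

lemma PSetoid_sup (L L' : Finset ℕ) :
    PSetoid n L ⊔ PSetoid n L' = PSetoid n (L ∪ L') := by
  apply le_antisymm
  · exact sup_le (PSetoid_mono Finset.subset_union_left)
      (PSetoid_mono Finset.subset_union_right)
  · rw [Setoid.le_def]
    have aux : ∀ d : ℕ, ∀ x y : Fin n, x.1 ≤ y.1 → y.1 - x.1 = d → PRel n (L ∪ L') x y →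
        (PSetoid n L ⊔ PSetoid n L') x y := by
      intro d
      induction d with
      | zero =>
        intro x y h1 h2 _
        have : x = y := Fin.ext (by omega)
        exact this ▸ (PSetoid n L ⊔ PSetoid n L').refl' x
      | succ d ih =>
        intro x y h1 h2 hrel
        have hx1 : x.1 + 1 < n := by omega
        set x' : Fin n := ⟨x.1 + 1, hx1⟩ with hx'
        have hbond : x.1 ∈ L ∪ L' := hrel x.1 (by omega) (by omega)
        have step : (PSetoid n L ⊔ PSetoid n L') x x' := by
          rcases Finset.mem_union.mp hbond with h | h
          · exact Setoid.le_def.mp le_sup_left (PSetoid_bond hx1 h)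
          · exact Setoid.le_def.mp le_sup_right (PSetoid_bond hx1 h)
        have rest : (PSetoid n L ⊔ PSetoid n L') x' y := by
          apply ih x' y (by simp [hx']; omega) (by simp [hx']; omega)
          intro k hk1 hk2
          exact hrel k (by simp [hx'] at hk1 ⊢; omega) (by simp [hx'] at hk2 ⊢; omega)
        exact (PSetoid n L ⊔ PSetoid n L').trans' step rest
    intro x y hxy
    rcases le_total x.1 y.1 with h | h
    · exact aux _ x y h rfl hxy
    · exact (PSetoid n L ⊔ PSetoid n L').symm' (aux _ y x h rfl hxy.symm')

/-- `s` maps every point into its own block. -/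
def Fixes {n : ℕ} (s : Equiv.Perm (Fin n)) (R : Setoid (Fin n)) : Prop :=
  ∀ x : Fin n, R x (s x)

lemma fixes_one (R : Setoid (Fin n)) : Fixes 1 R := fun x => R.refl' x

lemma fixes_mul {s t : Equiv.Perm (Fin n)} {R : Setoid (Fin n)}
    (hs : Fixes s R) (ht : Fixes t R) : Fixes (s * t) R := by
  intro x
  exact R.trans' (ht x) (hs (t x))

lemma fixes_mono {s : Equiv.Perm (Fin n)} {R R' : Setoid (Fin n)}
    (h : R ≤ R') (hs : Fixes s R) : Fixes s R' := fun x => Setoid.le_def.mp h (hs x)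

lemma fixesBlocks_iff_fixes {s : Equiv.Perm (Fin n)} {R : Setoid (Fin n)} :
    FixesBlocks s R ↔ Fixes s R := by
  constructor
  · intro h x
    have := h x
    have hx : s x ∈ s '' {y | R x y} := ⟨x, R.refl' x, rfl⟩
    rw [this] at hx
    exact hx
  · intro h x
    ext y
    constructor
    · rintro ⟨y', hy', rfl⟩
      exact R.trans' hy' (h y')
    · intro hy
      refine ⟨s.symm y, ?_, by simp⟩
      have := h (s.symm y)
      simp only [Equiv.apply_symm_apply] at this
      exact R.trans' hy (R.symm' this)

lemma permSetoid_eq_of_fixes {s : Equiv.Perm (Fin n)} {R : Setoid (Fin n)}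
    (h : Fixes s R) : permSetoid s R = R := by
  apply Setoid.ext
  intro a b
  rw [permSetoid_rel]
  constructor
  · intro hab
    have ha := h (s.symm a); have hb := h (s.symm b)
    simp only [Equiv.apply_symm_apply] at ha hb
    exact R.trans' (R.symm' ha) (R.trans' hab hb)
  · intro hab
    have ha := h (s.symm a); have hb := h (s.symm b)
    simp only [Equiv.apply_symm_apply] at ha hb
    exact R.trans' ha (R.trans' hab (R.symm' hb))

/-- The adjacent transposition `(c, c+1)`, or `1` if out of range. -/
def sigma (n : ℕ) (c : ℕ) : Equiv.Perm (Fin n) :=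
  if h : c + 1 < n then Equiv.swap ⟨c, by omega⟩ ⟨c + 1, h⟩ else 1

lemma fixes_sigma {L : Finset ℕ} {c : ℕ} (hc : c ∈ L) : Fixes (sigma n c) (PSetoid n L) := by
  intro x
  unfold sigma
  split_ifs with h
  · rcases eq_or_ne x ⟨c, by omega⟩ with rfl | h1
    · rw [Equiv.swap_apply_left]; exact PSetoid_bond h hc
    · rcases eq_or_ne x ⟨c + 1, h⟩ with rfl | h2
      · rw [Equiv.swap_apply_right]; exact (PSetoid n L).symm' (PSetoid_bond h hc)
      · rw [Equiv.swap_apply_of_ne_of_ne h1 h2]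
        try exact (PSetoid n L).refl' x
  · exact (PSetoid n L).refl' x

lemma sigma_absorb (c : ℕ) (X : Setoid (Fin n)) :
    PSetoid n {c} ⊔ permSetoid (sigma n c) X = PSetoid n {c} ⊔ X := by
  have hfix : Fixes (sigma n c) (PSetoid n {c}) := fixes_sigma (Finset.mem_singleton_self c)
  have h1 : Fixes (sigma n c) (PSetoid n {c} ⊔ X) := fixes_mono le_sup_left hfix
  calc PSetoid n {c} ⊔ permSetoid (sigma n c) X
      = permSetoid (sigma n c) (PSetoid n {c}) ⊔ permSetoid (sigma n c) X := by
        rw [permSetoid_eq_of_fixes hfix]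
    _ = permSetoid (sigma n c) (PSetoid n {c} ⊔ X) := (permSetoid_sup _ _ _).symm
    _ = PSetoid n {c} ⊔ X := permSetoid_eq_of_fixes h1

lemma sigma_sq (c : ℕ) : sigma n c * sigma n c = 1 := by
  unfold sigma
  split_ifs with h
  · exact Equiv.swap_mul_self _ _
  · exact one_mul 1

lemma sigma_apply_of_ne (c : ℕ) (x : Fin n) (h1 : x.1 ≠ c) (h2 : x.1 ≠ c + 1) :
    sigma n c x = x := by
  unfold sigma
  split_ifs with h
  · exact Equiv.swap_apply_of_ne_of_ne (fun hc => h1 (by rw [hc])) (fun hc => h2 (by rw [hc]))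
  · rfl

lemma sigma_comm {a b : ℕ} (h : a + 2 ≤ b) : sigma n a * sigma n b = sigma n b * sigma n a := by
  ext x
  simp only [Equiv.Perm.mul_apply]
  unfold sigma
  split_ifs with h1 h2
  · simp only [Equiv.swap_apply_def]
    split_ifs with g1 g2 g3 g4 g5 g6 g7 g8 g9 g10 g11 g12 <;>
      first
        | rfl
        | (apply Fin.ext; simp only [Fin.ext_iff] at *; omega)
        | (exfalso; simp only [Fin.ext_iff] at *; omega)
  · simp
  · simp
  · simp

lemma sigma_braid {a : ℕ} (h : a + 2 < n) :
    sigma n a * sigma n (a + 1) * sigma n a = sigma n (a + 1) * sigma n a * sigma n (a + 1) := by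
  have h1 : a + 1 < n := by omega
  have h0 : a < n := by omega
  unfold sigma
  rw [dif_pos h1, dif_pos h]
  set A : Fin n := ⟨a, h0⟩ with hA
  set B : Fin n := ⟨a + 1, h1⟩ with hB
  set C : Fin n := ⟨a + 2, h⟩ with hC
  have hAB : A ≠ B := by simp [hA, hB, Fin.ext_iff]
  have hBC : B ≠ C := by simp [hB, hC, Fin.ext_iff]
  have hAC : A ≠ C := by simp [hA, hC, Fin.ext_iff]
  have e1 : Equiv.swap A B * Equiv.swap B C * Equiv.swap A B = Equiv.swap A C := by
    have := Equiv.swap_mul_swap_mul_swap (x := C) (y := B) (z := A) (Ne.symm hBC) (Ne.symm hAC)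
    rw [Equiv.swap_comm B A, Equiv.swap_comm C B] at this
    rw [this, Equiv.swap_comm]
  have e2 : Equiv.swap B C * Equiv.swap A B * Equiv.swap B C = Equiv.swap A C := by
    have := Equiv.swap_mul_swap_mul_swap (x := A) (y := B) (z := C) hAB hAC
    rw [this, Equiv.swap_comm]
  rw [e1, e2]



variable {n : ℕ}

/-- Product of adjacent transpositions along a word. -/
def piW (n : ℕ) (w : List ℕ) : Equiv.Perm (Fin n) := (w.map (sigma n)).prod

lemma piW_nil : piW n [] = 1 := rfl

lemma piW_cons (c : ℕ) (w : List ℕ) : piW n (c :: w) = sigma n c * piW n w := by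
  simp [piW]

lemma piW_append (u v : List ℕ) : piW n (u ++ v) = piW n u * piW n v := by
  simp [piW]

lemma fixes_piW {L : Finset ℕ} {w : List ℕ} (h : ∀ c ∈ w, c ∈ L) :
    Fixes (piW n w) (PSetoid n L) := by
  induction w with
  | nil => exact fixes_one _
  | cons c w ih =>
    rw [piW_cons]
    exact fixes_mul (fixes_sigma (h c (by simp))) (ih (fun d hd => h d (by simp [hd])))

lemma piW_fix_above {m : ℕ} (hm : m + 1 < n) {w : List ℕ} (h : ∀ c ∈ w, c + 1 ≤ m) :
    piW n w ⟨m + 1, hm⟩ = ⟨m + 1, hm⟩ := by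
  induction w with
  | nil => rfl
  | cons c w ih =>
    rw [piW_cons, Equiv.Perm.mul_apply, ih (fun d hd => h d (by simp [hd]))]
    exact sigma_apply_of_ne c _ (by have := h c (by simp); simp; omega)
      (by have := h c (by simp); simp; omega)

lemma piW_range' {m : ℕ} (hm : m + 1 < n) :
    ∀ d j, ∀ hj : j + d = m + 1, piW n (List.range' j d) ⟨m + 1, hm⟩ = ⟨j, by omega⟩ := by
  intro d
  induction d with
  | zero =>
    intro j hj
    have hj' : j = m + 1 := by omega
    subst hj'
    simp [piW]
  | succ d ih =>
    intro j hj
    rw [List.range'_succ, piW_cons, Equiv.Perm.mul_apply, ih (j + 1) (by omega)]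
    have hj1 : j + 1 < n := by omega
    have : sigma n j = Equiv.swap ⟨j, by omega⟩ ⟨j + 1, hj1⟩ := dif_pos hj1
    rw [this]
    exact Equiv.swap_apply_right _ _

/-- `PSetoid` of the empty bond set is the discrete partition. -/
lemma PSetoid_empty : PSetoid n (∅ : Finset ℕ) = ⊥ := by
  apply Setoid.ext
  intro a b
  constructor
  · intro h
    have : a.1 = b.1 := by
      by_contra hne
      have h1 : min a.1 b.1 < max a.1 b.1 := by omega
      exact absurd (h (min a.1 b.1) le_rfl h1) (by simp)
    exact Fin.ext this
  · rintro rfl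
    exact (PSetoid n ∅).refl' a

lemma PSetoid_inj {L L' : Finset ℕ} (hL : ∀ l ∈ L, l + 1 < n) (hL' : ∀ l ∈ L', l + 1 < n)
    (h : PSetoid n L = PSetoid n L') : L = L' := by
  ext l
  constructor
  · intro hl
    have hv := hL l hl
    have := PSetoid_bond hv hl
    rw [h] at this
    exact (PSetoid_bond_iff hv).mp this
  · intro hl
    have hv := hL' l hl
    have := PSetoid_bond hv hl
    rw [← h] at this
    exact (PSetoid_bond_iff hv).mp this

/-- The bond set of a setoid. -/
noncomputable def bondsOf (I : Setoid (Fin n)) : Finset ℕ :=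
  (Finset.range n).filter (fun c => ∃ h : c + 1 < n, I ⟨c, by omega⟩ ⟨c + 1, h⟩)

lemma bondsOf_valid (I : Setoid (Fin n)) : ∀ l ∈ bondsOf I, l + 1 < n := by
  intro l hl
  rcases Finset.mem_filter.mp hl with ⟨-, h, -⟩
  exact h

lemma mem_bondsOf {I : Setoid (Fin n)} {c : ℕ} (hc : c + 1 < n)
    (h : I ⟨c, by omega⟩ ⟨c + 1, hc⟩) : c ∈ bondsOf I :=
  Finset.mem_filter.mpr ⟨Finset.mem_range.mpr (by omega), hc, h⟩

lemma linear_eq_PSetoid {I : Setoid (Fin n)} (hlin : IsLinear I) :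
    I = PSetoid n (bondsOf I) := by
  have dir1 : ∀ x y : Fin n, x ≤ y → I x y → PRel n (bondsOf I) x y := by
    intro x y hxy h k hk1 hk2
    have hxv : x.1 ≤ y.1 := hxy
    have hk : x.1 ≤ k ∧ k + 1 ≤ y.1 := by omega
    have hkn : k + 1 < n := by omega
    have h1 : I x ⟨k, by omega⟩ := hlin x ⟨k, by omega⟩ y (by exact hk.1) (by
      show (k : ℕ) ≤ y.1; omega) h
    have h2 : I x ⟨k + 1, hkn⟩ := hlin x ⟨k + 1, hkn⟩ y (by show x.1 ≤ k + 1; omega)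
      (by show k + 1 ≤ y.1; omega) h
    exact mem_bondsOf hkn (I.trans' (I.symm' h1) h2)
  have dir2 : ∀ d : ℕ, ∀ x y : Fin n, x.1 ≤ y.1 → y.1 - x.1 = d →
      PRel n (bondsOf I) x y → I x y := by
    intro d
    induction d with
    | zero =>
      intro x y h1 h2 _
      have : x = y := Fin.ext (by omega)
      exact this ▸ I.refl' x
    | succ d ih =>
      intro x y h1 h2 hrel
      have hx1 : x.1 + 1 < n := by omega
      have hbond : x.1 ∈ bondsOf I := hrel x.1 (by omega) (by omega)
      rcases Finset.mem_filter.mp hbond with ⟨-, hv, hI⟩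
      have step : I x ⟨x.1 + 1, hx1⟩ := by
        convert hI using 2 <;> exact rfl
      refine I.trans' step (ih ⟨x.1 + 1, hx1⟩ y (by simp; omega) (by simp; omega) ?_)
      intro k hk1 hk2
      simp only at hk1 hk2
      exact hrel k (by omega) (by omega)
  apply Setoid.ext
  intro a b
  constructor
  · intro h
    rcases le_total a.1 b.1 with hab | hab
    · exact dir1 a b hab h
    · exact (PRel.symm' (dir1 b a hab (I.symm' h)))
  · intro h
    rcases le_total a.1 b.1 with hab | hab
    · exact dir2 _ a b hab rfl h
    · exact I.symm' (dir2 _ b a hab rfl (PRel.symm' h))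

section Generation

/-- Number of inversions of a permutation. -/
noncomputable def nu (s : Equiv.Perm (Fin n)) : ℕ :=
  ((Finset.univ : Finset (Fin n × Fin n)).filter
    (fun p => p.1 < p.2 ∧ s p.2 < s p.1)).card

lemma strictMono_perm_eq_one {s : Equiv.Perm (Fin n)} (h : StrictMono s) : s = 1 := by
  have key : ∀ f : Equiv.Perm (Fin n), StrictMono f → ∀ x : Fin n, x ≤ f x := by
    intro f hf
    have : ∀ v : ℕ, ∀ x : Fin n, x.1 = v → x ≤ f x := by
      intro v
      induction v using Nat.strong_induction_on with
      | _ v ih =>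
        intro x hx
        rcases Nat.eq_zero_or_pos v with hv | hv
        · show x.1 ≤ (f x).1; omega
        · have hy : v - 1 < n := by omega
          set y : Fin n := ⟨v - 1, hy⟩ with hyd
          have h1 : y < x := by simp [hyd, Fin.lt_def]; omega
          have h2 : v - 1 ≤ (f y).1 := by
            have := ih (v - 1) (by omega) y rfl
            simpa [Fin.le_def, hyd] using this
          have h3 : (f y).1 < (f x).1 := hf h1
          show x.1 ≤ (f x).1
          omega
    exact fun x => this x.1 x rfl
  have hinv : StrictMono (s⁻¹ : Equiv.Perm (Fin n)) := by
    intro a b hab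
    rcases lt_trichotomy (s⁻¹ a) (s⁻¹ b) with h1 | h1 | h1
    · exact h1
    · exfalso; have : a = b := by
        have := congrArg s (congrArg id h1)
        simpa using this
      exact absurd this (ne_of_lt hab)
    · exfalso
      have := h h1
      simp only [Equiv.Perm.inv_def, Equiv.apply_symm_apply] at this
      exact absurd hab (not_lt.mpr (le_of_lt this))
  apply Equiv.ext
  intro x
  have h1 : x ≤ s x := key s h x
  have h2 : x ≤ s⁻¹ x := key s⁻¹ hinv x
  have h3 : s x ≤ s (s⁻¹ x) := h.monotone h2
  simp only [Equiv.Perm.inv_def, Equiv.apply_symm_apply] at h3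
  have : s x = x := le_antisymm h3 h1
  simp [this]

lemma exists_descent {s : Equiv.Perm (Fin n)} (hs : s ≠ 1) :
    ∃ i : ℕ, ∃ h : i + 1 < n, s ⟨i + 1, h⟩ < s ⟨i, by omega⟩ := by
  by_contra hcon
  push_neg at hcon
  apply hs
  apply strictMono_perm_eq_one
  have mono : ∀ d : ℕ, ∀ a b : Fin n, a.1 ≤ b.1 → b.1 - a.1 = d → s a ≤ s b := by
    intro d
    induction d with
    | zero => intro a b h1 h2; have : a = b := Fin.ext (by omega); rw [this]
    | succ d ih =>
      intro a b h1 h2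
      have ha1 : a.1 + 1 < n := by omega
      have step := hcon a.1 ha1
      have : (⟨a.1, by omega⟩ : Fin n) = a := Fin.ext rfl
      rw [this] at step
      exact le_trans step (ih ⟨a.1 + 1, ha1⟩ b (by simp; omega) (by simp; omega))
  intro a b hab
  have h1 : s a ≤ s b := mono _ a b (le_of_lt hab) rfl
  exact lt_of_le_of_ne h1 (fun he => absurd (s.injective he) (ne_of_lt hab))

lemma linear_sep {R : Setoid (Fin n)} (hlin : IsLinear R) {x y x' y' : Fin n}
    (hxy : x < y) (hnR : ¬ R x y) (hx : R x x') (hy : R y y') : x' < y' := by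
  by_contra hcon
  push_neg at hcon
  apply hnR
  rcases le_total y.1 x'.1 with h1 | h1
  · exact hlin x y x' (le_of_lt hxy) h1 hx
  · have h2 : R y' x' := hlin y' x' y hcon h1 (R.symm' hy)
    exact R.trans' hx (R.trans' (R.symm' h2) (R.symm' hy))

lemma descent_mem {L : Finset ℕ} {s : Equiv.Perm (Fin n)}
    (hfix : Fixes s (PSetoid n L)) {i : ℕ} (hi : i + 1 < n)
    (hd : s ⟨i + 1, hi⟩ < s ⟨i, by omega⟩) : i ∈ L := by
  by_contra hcon
  have hnR : ¬ PSetoid n L ⟨i, by omega⟩ ⟨i + 1, hi⟩ := fun h =>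
    hcon ((PSetoid_bond_iff hi).mp h)
  have := linear_sep (PSetoid_linear L) (x := ⟨i, by omega⟩) (y := ⟨i + 1, hi⟩)
    (by simp [Fin.lt_def]) hnR (hfix _) (hfix _)
  exact absurd hd (not_lt.mpr (le_of_lt this))

lemma swap_lt {i : ℕ} (hi : i + 1 < n) {x y : Fin n} (hxy : x < y)
    (hne : ¬(x = ⟨i, by omega⟩ ∧ y = ⟨i + 1, hi⟩)) :
    Equiv.swap ⟨i, by omega⟩ ⟨i + 1, hi⟩ x < Equiv.swap ⟨i, by omega⟩ ⟨i + 1, hi⟩ y := by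
  have key : ∀ z : Fin n, ((Equiv.swap ⟨i, by omega⟩ ⟨i + 1, hi⟩ : Equiv.Perm (Fin n)) z).1
      = if z.1 = i then i + 1 else if z.1 = i + 1 then i else z.1 := by
    intro z
    rw [Equiv.swap_apply_def]
    split_ifs <;>
      first
        | rfl
        | (simp only [Fin.ext_iff] at *; omega)
  have hne' : ¬(x.1 = i ∧ y.1 = i + 1) := fun h => hne ⟨Fin.ext h.1, Fin.ext h.2⟩
  have hxy' : x.1 < y.1 := hxy
  rw [Fin.lt_def, key x, key y]
  split_ifs <;> omega

lemma nu_mul_sigma_lt {s : Equiv.Perm (Fin n)} {i : ℕ} (hi : i + 1 < n)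
    (hd : s ⟨i + 1, hi⟩ < s ⟨i, by omega⟩) : nu (s * sigma n i) < nu s := by
  set I : Fin n := ⟨i, by omega⟩ with hI
  set I1 : Fin n := ⟨i + 1, hi⟩ with hI1
  have hσ : sigma n i = Equiv.swap I I1 := dif_pos hi
  set T := Equiv.swap I I1 with hT
  have hTI : T I = I1 := Equiv.swap_apply_left _ _
  have hTI1 : T I1 = I := Equiv.swap_apply_right _ _
  have hmem : (I, I1) ∈ (Finset.univ : Finset (Fin n × Fin n)).filter
      (fun p => p.1 < p.2 ∧ s p.2 < s p.1) := by
    refine Finset.mem_filter.mpr ⟨Finset.mem_univ _, ?_, hd⟩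
    simp [hI, hI1, Fin.lt_def]
  have hcard : nu (s * sigma n i) ≤ (((Finset.univ : Finset (Fin n × Fin n)).filter
      (fun p => p.1 < p.2 ∧ s p.2 < s p.1)).erase (I, I1)).card := by
    apply Finset.card_le_card_of_injOn (fun p => (T p.1, T p.2))
    · intro p hp
      rcases Finset.mem_filter.mp hp with ⟨-, hlt, hinv⟩
      have hinv' : s (T p.2) < s (T p.1) := by
        rw [hσ] at hinv
        exact hinv
      have hpne : ¬(p.1 = I ∧ p.2 = I1) := by
        rintro ⟨h1, h2⟩
        rw [h1, h2] at hinv'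
        rw [hTI, hTI1] at hinv'
        exact absurd hinv' (not_lt.mpr (le_of_lt hd))
      have hlt' : T p.1 < T p.2 := swap_lt hi hlt hpne
      apply Finset.mem_erase.mpr
      constructor
      · intro hcon
        have h1 : T p.1 = I := congrArg Prod.fst hcon
        have h2 : T p.2 = I1 := congrArg Prod.snd hcon
        have g1 : p.1 = I1 := by
          have := congrArg T h1
          rwa [Equiv.swap_apply_self, hTI] at this
        have g2 : p.2 = I := by
          have := congrArg T h2
          rwa [Equiv.swap_apply_self, hTI1] at this
        rw [g1, g2] at hlt
        simp [hI, hI1, Fin.lt_def] at hlt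
      · exact Finset.mem_filter.mpr ⟨Finset.mem_univ _, hlt', hinv'⟩
    · intro p _ q _ hpq
      have h1 : T p.1 = T q.1 := congrArg Prod.fst hpq
      have h2 : T p.2 = T q.2 := congrArg Prod.snd hpq
      exact Prod.ext (T.injective h1) (T.injective h2)
  have : (((Finset.univ : Finset (Fin n × Fin n)).filter
      (fun p => p.1 < p.2 ∧ s p.2 < s p.1)).erase (I, I1)).card <
      ((Finset.univ : Finset (Fin n × Fin n)).filter
      (fun p => p.1 < p.2 ∧ s p.2 < s p.1)).card :=
    Finset.card_erase_lt_of_mem hmem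
  exact lt_of_le_of_lt hcard this

lemma generation {L : Finset ℕ} (hL : ∀ l ∈ L, l + 1 < n) :
    ∀ s : Equiv.Perm (Fin n), Fixes s (PSetoid n L) →
      ∃ w : List ℕ, (∀ c ∈ w, c ∈ L) ∧ piW n w = s := by
  suffices H : ∀ N : ℕ, ∀ s : Equiv.Perm (Fin n), nu s ≤ N → Fixes s (PSetoid n L) →
      ∃ w : List ℕ, (∀ c ∈ w, c ∈ L) ∧ piW n w = s by
    intro s hs
    exact H (nu s) s le_rfl hs
  intro N
  induction N with
  | zero =>
    intro s hν _
    rcases eq_or_ne s 1 with rfl | hs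
    · exact ⟨[], by simp, rfl⟩
    · exfalso
      rcases exists_descent hs with ⟨i, hi, hd⟩
      have hmem : (⟨⟨i, by omega⟩, ⟨i + 1, hi⟩⟩ : Fin n × Fin n) ∈
          (Finset.univ : Finset (Fin n × Fin n)).filter
          (fun p => p.1 < p.2 ∧ s p.2 < s p.1) :=
        Finset.mem_filter.mpr ⟨Finset.mem_univ _, by simp [Fin.lt_def], hd⟩
      have : 0 < nu s := Finset.card_pos.mpr ⟨_, hmem⟩
      omega
  | succ N ih =>
    intro s hν hfix
    rcases eq_or_ne s 1 with rfl | hs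
    · exact ⟨[], by simp, rfl⟩
    · rcases exists_descent hs with ⟨i, hi, hd⟩
      have hiL : i ∈ L := descent_mem hfix hi hd
      have hlt : nu (s * sigma n i) < nu s := nu_mul_sigma_lt hi hd
      have hfix2 : Fixes (s * sigma n i) (PSetoid n L) :=
        fixes_mul hfix (fixes_sigma hiL)
      rcases ih (s * sigma n i) (by omega) hfix2 with ⟨w, hw, hπ⟩
      refine ⟨w ++ [i], ?_, ?_⟩
      · intro c hc
        rcases List.mem_append.mp hc with h | h
        · exact hw c h
        · simp at h; exact h ▸ hiL
      · rw [piW_append, hπ]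
        have : piW n [i] = sigma n i := by simp [piW]
        rw [this, mul_assoc, sigma_sq, mul_one]
end Generation



variable {n : ℕ}

/-! ### Bridging the given generators with `PSetoid`/`sigma` -/

lemma pairSetoid_eq (i : Fin (n - 1)) :
    pairSetoid (⟨i.1, by omega⟩ : Fin n) ⟨i.1 + 1, by omega⟩ = PSetoid n {i.1} := by
  apply Setoid.ext
  intro a b
  constructor
  · rintro (rfl | ⟨rfl, rfl⟩ | ⟨rfl, rfl⟩)
    · exact (PSetoid n {i.1}).refl' a
    · exact PSetoid_bond (by omega) (Finset.mem_singleton_self _)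
    · exact (PSetoid n {i.1}).symm' (PSetoid_bond (by omega) (Finset.mem_singleton_self _))
  · intro h
    by_cases hab : a = b
    · exact Or.inl hab
    · have hne : a.1 ≠ b.1 := fun hv => hab (Fin.ext hv)
      have hlt : min a.1 b.1 < max a.1 b.1 := by omega
      have h1 : min a.1 b.1 ∈ ({i.1} : Finset ℕ) := h _ le_rfl hlt
      have h1' : min a.1 b.1 = i.1 := Finset.mem_singleton.mp h1
      have h2 : max a.1 b.1 = i.1 + 1 := by
        by_contra hcon
        have hlt2 : min a.1 b.1 + 1 < max a.1 b.1 := by omega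
        have := Finset.mem_singleton.mp (h (min a.1 b.1 + 1) (by omega) hlt2)
        omega
      rcases le_total a.1 b.1 with hab' | hab'
      · refine Or.inr (Or.inl ⟨Fin.ext ?_, Fin.ext ?_⟩) <;> simp <;> omega
      · refine Or.inr (Or.inr ⟨Fin.ext ?_, Fin.ext ?_⟩) <;> simp <;> omega

lemma eElt_eq (i : Fin (n - 1)) : eElt i = ((PSetoid n {i.1}, 1) : RS n) := by
  unfold eElt
  rw [pairSetoid_eq]

lemma zElt_eq (i : Fin (n - 1)) : zElt i = ((PSetoid n {i.1}, sigma n i.1) : RS n) := by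
  unfold zElt
  rw [pairSetoid_eq]
  have h : i.1 + 1 < n := by omega
  have : sigma n i.1 = Equiv.swap ⟨i.1, by omega⟩ ⟨i.1 + 1, h⟩ := dif_pos h
  rw [this]

/-! ### The relations hold in `RS n` -/

lemma rs_esq (i : Fin (n - 1)) : eElt i * eElt i = eElt (n := n) i := by
  rw [eElt_eq, RS.mul_def]
  simp [permSetoid_one]

lemma rs_ecomm (i j : Fin (n - 1)) : eElt i * eElt j = eElt j * eElt (n := n) i := by
  rw [eElt_eq, eElt_eq, RS.mul_def, RS.mul_def]
  simp [permSetoid_one, sup_comm]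

lemma rs_ezcomm (i j : Fin (n - 1)) : eElt i * zElt j = zElt j * eElt (n := n) i := by
  rw [eElt_eq, zElt_eq, RS.mul_def, RS.mul_def]
  simp only [permSetoid_one, sigma_absorb, one_mul, mul_one]
  rw [sup_comm]

lemma rs_zsq (i : Fin (n - 1)) : zElt i * zElt i = eElt (n := n) i := by
  rw [eElt_eq, zElt_eq, RS.mul_def]
  simp [sigma_absorb, sigma_sq]

lemma rs_ez (i : Fin (n - 1)) : eElt i * zElt i = zElt (n := n) i := by
  rw [eElt_eq, zElt_eq, RS.mul_def]
  simp [permSetoid_one]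

lemma rs_braid_aux (a b : Fin (n - 1)) (hab : b.1 = a.1 + 1) :
    zElt a * zElt b * zElt a = zElt b * zElt a * zElt (n := n) b := by
  rw [zElt_eq, zElt_eq]
  simp only [RS.mul_def]
  have hperm : sigma n a.1 * sigma n b.1 * sigma n a.1
      = sigma n b.1 * sigma n a.1 * sigma n b.1 := by
    rw [hab]
    exact sigma_braid (by omega)
  refine Prod.ext ?_ hperm
  show (PSetoid n {a.1} ⊔ permSetoid (sigma n a.1) (PSetoid n {b.1}))
      ⊔ permSetoid (sigma n a.1 * sigma n b.1) (PSetoid n {a.1})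
    = (PSetoid n {b.1} ⊔ permSetoid (sigma n b.1) (PSetoid n {a.1}))
      ⊔ permSetoid (sigma n b.1 * sigma n a.1) (PSetoid n {b.1})
  rw [permSetoid_mul, permSetoid_mul, sup_assoc, sup_assoc, ← permSetoid_sup,
    ← permSetoid_sup, sigma_absorb, sigma_absorb, sigma_absorb, sigma_absorb,
    PSetoid_sup, PSetoid_sup, PSetoid_sup, PSetoid_sup]
  congr 1
  ext x
  simp only [Finset.mem_union, Finset.mem_singleton]
  tauto

lemma rs_zcomm_aux (a b : Fin (n - 1)) (hab : a.1 + 2 ≤ b.1) :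
    zElt a * zElt b = zElt b * zElt (n := n) a := by
  rw [zElt_eq, zElt_eq]
  simp only [RS.mul_def]
  refine Prod.ext ?_ (sigma_comm hab)
  show PSetoid n {a.1} ⊔ permSetoid (sigma n a.1) (PSetoid n {b.1})
    = PSetoid n {b.1} ⊔ permSetoid (sigma n b.1) (PSetoid n {a.1})
  rw [sigma_absorb, sigma_absorb, sup_comm]

/-! ### The homomorphism φ -/

/-- The target values of the presentation map. -/
def brFun : BRGen n → RS n
  | .E i => eElt i
  | .Z i => zElt i

lemma brFun_rel : ∀ a b : FreeMonoid (BRGen n), BRGen.Rel n a b →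
    FreeMonoid.lift brFun a = FreeMonoid.lift brFun b := by
  intro a b h
  induction h with
  | esq i => simp only [map_mul, FreeMonoid.lift_eval_of, brFun]; exact rs_esq i
  | ecomm i j => simp only [map_mul, FreeMonoid.lift_eval_of, brFun]; exact rs_ecomm i j
  | braid i j hd =>
    simp only [map_mul, FreeMonoid.lift_eval_of, brFun]
    have : j.1 = i.1 + 1 ∨ i.1 = j.1 + 1 := by
      simp [Nat.dist] at hd; omega
    rcases this with h | h
    · exact rs_braid_aux i j h
    · exact (rs_braid_aux j i h).symm
  | zcomm i j hd =>
    simp only [map_mul, FreeMonoid.lift_eval_of, brFun]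
    have : i.1 + 2 ≤ j.1 ∨ j.1 + 2 ≤ i.1 := by
      simp [Nat.dist] at hd; omega
    rcases this with h | h
    · exact rs_zcomm_aux i j h
    · exact (rs_zcomm_aux j i h).symm
  | ezcomm i j => simp only [map_mul, FreeMonoid.lift_eval_of, brFun]; exact rs_ezcomm i j
  | zsq i => simp only [map_mul, FreeMonoid.lift_eval_of, brFun]; exact rs_zsq i
  | ez i => simp only [map_mul, FreeMonoid.lift_eval_of, brFun]; exact rs_ez i

/-- The presentation homomorphism. -/
noncomputable def phi (n : ℕ) : PresentedMonoid (BRGen.Rel n) →* RS n :=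
  PresentedMonoid.lift brFun brFun_rel

lemma phi_E (i : Fin (n - 1)) : phi n (PresentedMonoid.of (BRGen.Rel n) (BRGen.E i)) = eElt i :=
  rfl

lemma phi_Z (i : Fin (n - 1)) : phi n (PresentedMonoid.of (BRGen.Rel n) (BRGen.Z i)) = zElt i :=
  rfl

/-- Second projection as a monoid hom. -/
def sndHom (n : ℕ) : RS n →* Equiv.Perm (Fin n) where
  toFun := Prod.snd
  map_one' := rfl
  map_mul' := fun _ _ => rfl



variable {n : ℕ}

namespace BRM

/-- Soundness of the presentation relations. -/
lemma brel {a b : FreeMonoid (BRGen n)} (h : BRGen.Rel n a b) :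
    PresentedMonoid.mk (BRGen.Rel n) a = PresentedMonoid.mk (BRGen.Rel n) b :=
  Quot.sound (ConGen.Rel.of a b h)

/-- The idempotent generator, with junk value `1` out of range. -/
noncomputable def EM (n : ℕ) (c : ℕ) : PresentedMonoid (BRGen.Rel n) :=
  if h : c + 1 < n then PresentedMonoid.of (BRGen.Rel n) (BRGen.E ⟨c, by omega⟩) else 1

/-- The braid generator, with junk value `1` out of range. -/
noncomputable def ZM (n : ℕ) (c : ℕ) : PresentedMonoid (BRGen.Rel n) :=
  if h : c + 1 < n then PresentedMonoid.of (BRGen.Rel n) (BRGen.Z ⟨c, by omega⟩) else 1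

lemma of_E_eq (i : Fin (n - 1)) :
    PresentedMonoid.of (BRGen.Rel n) (BRGen.E i) = EM n i.1 := by
  rw [EM, dif_pos (by omega : i.1 + 1 < n)]

lemma of_Z_eq (i : Fin (n - 1)) :
    PresentedMonoid.of (BRGen.Rel n) (BRGen.Z i) = ZM n i.1 := by
  rw [ZM, dif_pos (by omega : i.1 + 1 < n)]

lemma rel_esq (c : ℕ) : EM n c * EM n c = EM n c := by
  unfold EM
  split_ifs with h
  · exact brel (BRGen.Rel.esq ⟨c, by omega⟩)
  · exact one_mul 1

lemma rel_ecomm (c d : ℕ) : EM n c * EM n d = EM n d * EM n c := by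
  unfold EM
  split_ifs with h1 h2 h2
  · exact brel (BRGen.Rel.ecomm ⟨c, by omega⟩ ⟨d, by omega⟩)
  · rw [one_mul, mul_one]
  · rw [one_mul, mul_one]
  · rfl

lemma rel_ezcomm (c d : ℕ) : EM n c * ZM n d = ZM n d * EM n c := by
  unfold EM ZM
  split_ifs with h1 h2 h2
  · exact brel (BRGen.Rel.ezcomm ⟨c, by omega⟩ ⟨d, by omega⟩)
  · rw [one_mul, mul_one]
  · rw [one_mul, mul_one]
  · rfl

lemma rel_zsq (c : ℕ) : ZM n c * ZM n c = EM n c := by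
  unfold EM ZM
  split_ifs with h
  · exact brel (BRGen.Rel.zsq ⟨c, by omega⟩)
  · exact one_mul 1

lemma rel_ez (c : ℕ) : EM n c * ZM n c = ZM n c := by
  unfold EM ZM
  split_ifs with h
  · exact brel (BRGen.Rel.ez ⟨c, by omega⟩)
  · exact one_mul 1

lemma rel_braid {c : ℕ} (h : c + 2 < n) :
    ZM n c * ZM n (c + 1) * ZM n c = ZM n (c + 1) * ZM n c * ZM n (c + 1) := by
  unfold ZM
  rw [dif_pos (by omega : c + 1 < n), dif_pos (by omega : c + 1 + 1 < n)]
  exact brel (BRGen.Rel.braid ⟨c, by omega⟩ ⟨c + 1, by omega⟩ (by simp [Nat.dist]))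

lemma rel_zcomm {c d : ℕ} (h : c + 2 ≤ d) : ZM n c * ZM n d = ZM n d * ZM n c := by
  unfold ZM
  split_ifs with h1 h2 h2
  · refine brel (BRGen.Rel.zcomm ⟨c, by omega⟩ ⟨d, by omega⟩ ?_)
    simp [Nat.dist]; omega
  · rw [one_mul, mul_one]
  · rw [one_mul, mul_one]
  · rfl

/-- `EM` is central. -/
lemma EM_central (c : ℕ) (x : PresentedMonoid (BRGen.Rel n)) : EM n c * x = x * EM n c := by
  induction x with
  | _ a =>
    induction a using FreeMonoid.inductionOn' with
    | one =>
      show EM n c * 1 = 1 * EM n c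
      rw [one_mul, mul_one]
    | of_mul b w ih =>
      have hb : EM n c * PresentedMonoid.mk (BRGen.Rel n) (FreeMonoid.of b)
          = PresentedMonoid.mk (BRGen.Rel n) (FreeMonoid.of b) * EM n c := by
        cases b with
        | E i => rw [show PresentedMonoid.mk (BRGen.Rel n) (FreeMonoid.of (BRGen.E i))
            = PresentedMonoid.of (BRGen.Rel n) (BRGen.E i) from rfl, of_E_eq]
                 exact rel_ecomm c i.1
        | Z i => rw [show PresentedMonoid.mk (BRGen.Rel n) (FreeMonoid.of (BRGen.Z i))
            = PresentedMonoid.of (BRGen.Rel n) (BRGen.Z i) from rfl, of_Z_eq]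
                 exact rel_ezcomm c i.1
      rw [map_mul]
      rw [← mul_assoc, hb, mul_assoc, ih, ← mul_assoc]

/-- Product of the `EM`'s over a finite set. -/
noncomputable def AM (n : ℕ) (L : Finset ℕ) : PresentedMonoid (BRGen.Rel n) :=
  (L.toList.map (EM n)).prod

lemma prod_EM_central (l : List ℕ) (x : PresentedMonoid (BRGen.Rel n)) :
    (l.map (EM n)).prod * x = x * (l.map (EM n)).prod := by
  induction l with
  | nil => simp
  | cons c l ih =>
    simp only [List.map_cons, List.prod_cons]
    rw [mul_assoc, ih, ← mul_assoc, EM_central, mul_assoc]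

lemma AM_central (L : Finset ℕ) (x : PresentedMonoid (BRGen.Rel n)) :
    AM n L * x = x * AM n L := prod_EM_central _ x

lemma prod_EM_perm {l l' : List ℕ} (h : l.Perm l') :
    (l.map (EM n)).prod = (l'.map (EM n)).prod := by
  apply List.Perm.prod_eq' (h.map (EM n))
  have : ∀ (l₀ : List ℕ), (l₀.map (EM n)).Pairwise Commute := by
    intro l₀
    induction l₀ with
    | nil => exact List.Pairwise.nil
    | cons c l₀ ih =>
      simp only [List.map_cons]
      exact List.Pairwise.cons (fun b _ => (EM_central c b)) ih
  exact this l

lemma AM_empty : AM n ∅ = 1 := by simp [AM]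

lemma AM_insert {c : ℕ} {L : Finset ℕ} (hc : c ∉ L) :
    AM n (insert c L) = EM n c * AM n L := by
  unfold AM
  rw [prod_EM_perm (Finset.toList_insert hc)]
  simp

lemma AM_singleton (c : ℕ) : AM n {c} = EM n c := by
  unfold AM
  simp

lemma EM_mul_AM {c : ℕ} {L : Finset ℕ} (hc : c ∈ L) : EM n c * AM n L = AM n L := by
  have h1 : insert c (L.erase c) = L := Finset.insert_erase hc
  rw [← h1, AM_insert (Finset.notMem_erase c L), ← mul_assoc, rel_esq]

lemma AM_union (L L' : Finset ℕ) : AM n (L ∪ L') = AM n L * AM n L' := by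
  induction L using Finset.induction_on with
  | empty => simp [AM_empty]
  | @insert c L hc ih =>
    rw [AM_insert hc]
    by_cases hc' : c ∈ L ∪ L'
    · have h2 : insert c L ∪ L' = L ∪ L' := by
        rw [Finset.insert_union]
        exact Finset.insert_eq_self.mpr hc'
      have hcL' : c ∈ L' := (Finset.mem_union.mp hc').resolve_left hc
      rw [h2, ih, EM_central c (AM n L), mul_assoc, EM_mul_AM hcL']
    · rw [Finset.insert_union, AM_insert (by simpa using hc'), ih, mul_assoc]

/-- Product of `ZM`'s over a word. -/
noncomputable def ZWM (n : ℕ) (w : List ℕ) : PresentedMonoid (BRGen.Rel n) :=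
  (w.map (ZM n)).prod

lemma ZWM_nil : ZWM n [] = 1 := rfl

lemma ZWM_cons (c : ℕ) (w : List ℕ) : ZWM n (c :: w) = ZM n c * ZWM n w := by
  simp [ZWM]

lemma ZWM_append (u v : List ℕ) : ZWM n (u ++ v) = ZWM n u * ZWM n v := by
  simp [ZWM]

lemma EM_absorb {c : ℕ} {w : List ℕ} (hc : c ∈ w) : EM n c * ZWM n w = ZWM n w := by
  induction w with
  | nil => simp at hc
  | cons b w ih =>
    rw [ZWM_cons]
    rcases List.mem_cons.mp hc with rfl | hc'
    · rw [← mul_assoc, rel_ez]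
    · rw [← mul_assoc, rel_ezcomm, mul_assoc, ih hc']

/-- Every element has the form `AM L * ZWM w` with letters of `w` in `L`. -/
lemma normal_form (x : PresentedMonoid (BRGen.Rel n)) :
    ∃ (L : Finset ℕ) (w : List ℕ), (∀ l ∈ L, l + 1 < n) ∧ (∀ c ∈ w, c ∈ L) ∧
      x = AM n L * ZWM n w := by
  induction x with
  | _ a =>
    induction a using FreeMonoid.inductionOn' with
    | one =>
      exact ⟨∅, [], by simp, by simp, by rw [AM_empty, ZWM_nil, one_mul]; rfl⟩
    | of_mul b w ih =>
      rcases ih with ⟨L, w0, hL, hw0, heq⟩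
      rw [map_mul, heq]
      cases b with
      | E i =>
        refine ⟨{i.1} ∪ L, w0, ?_, fun c hc => Finset.mem_union_right _ (hw0 c hc), ?_⟩
        · intro l hl
          rcases Finset.mem_union.mp hl with h | h
          · have := Finset.mem_singleton.mp h; omega
          · exact hL l h
        · rw [show PresentedMonoid.mk (BRGen.Rel n) (FreeMonoid.of (BRGen.E i))
            = PresentedMonoid.of (BRGen.Rel n) (BRGen.E i) from rfl, of_E_eq]
          rw [AM_union, AM_singleton, mul_assoc]
      | Z i =>
        refine ⟨{i.1} ∪ L, i.1 :: w0, ?_, ?_, ?_⟩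
        · intro l hl
          rcases Finset.mem_union.mp hl with h | h
          · have := Finset.mem_singleton.mp h; omega
          · exact hL l h
        · intro c hc
          rcases List.mem_cons.mp hc with rfl | hc'
          · exact Finset.mem_union_left _ (Finset.mem_singleton_self _)
          · exact Finset.mem_union_right _ (hw0 c hc')
        · rw [show PresentedMonoid.mk (BRGen.Rel n) (FreeMonoid.of (BRGen.Z i))
            = PresentedMonoid.of (BRGen.Rel n) (BRGen.Z i) from rfl, of_Z_eq]
          rw [AM_union, AM_singleton]
          calc ZM n i.1 * (AM n L * ZWM n w0)
              = (ZM n i.1 * AM n L) * ZWM n w0 := by rw [mul_assoc]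
            _ = (AM n L * ZM n i.1) * ZWM n w0 := by rw [← AM_central]
            _ = AM n L * ZWM n (i.1 :: w0) := by rw [mul_assoc, ← ZWM_cons]
            _ = AM n L * (EM n i.1 * ZWM n (i.1 :: w0)) := by
                  rw [EM_absorb (List.mem_cons_self (a := i.1) (l := w0))]
            _ = (AM n L * EM n i.1) * ZWM n (i.1 :: w0) := by rw [mul_assoc]
            _ = (EM n i.1 * AM n L) * ZWM n (i.1 :: w0) := by rw [AM_central]

end BRM



variable {n : ℕ}

namespace BRM

lemma mem_range'_iff {s l m : ℕ} : m ∈ List.range' s l ↔ s ≤ m ∧ m < s + l := by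
  rw [List.mem_range']
  constructor
  · rintro ⟨i, hi, rfl⟩; omega
  · intro h; exact ⟨m - s, by omega, by omega⟩

/-! ### Values of φ -/

lemma PSetoid_invalid {c : ℕ} (h : ¬ c + 1 < n) : PSetoid n {c} = ⊥ := by
  apply Setoid.ext
  intro a b
  constructor
  · intro hr
    have ha := a.isLt
    have hb := b.isLt
    have : a.1 = b.1 := by
      by_contra hne
      have h1 : min a.1 b.1 < max a.1 b.1 := by omega
      have h2 := Finset.mem_singleton.mp (hr _ le_rfl h1)
      omega
    exact Fin.ext this
  · rintro rfl
    exact (PSetoid n {c}).refl' a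

lemma phi_EM (c : ℕ) : phi n (EM n c) = ((PSetoid n {c}, 1) : RS n) := by
  unfold EM
  split_ifs with h
  · rw [show phi n (PresentedMonoid.of (BRGen.Rel n) (BRGen.E ⟨c, by omega⟩))
      = eElt ⟨c, by omega⟩ from rfl, eElt_eq]
  · rw [map_one, PSetoid_invalid h]
    rfl

lemma phi_ZM (c : ℕ) : phi n (ZM n c) = ((PSetoid n {c}, sigma n c) : RS n) := by
  unfold ZM
  split_ifs with h
  · rw [show phi n (PresentedMonoid.of (BRGen.Rel n) (BRGen.Z ⟨c, by omega⟩))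
      = zElt ⟨c, by omega⟩ from rfl, zElt_eq]
  · rw [map_one, PSetoid_invalid h]
    unfold sigma
    rw [dif_neg h]
    rfl

lemma phi_AM (L : Finset ℕ) : phi n (AM n L) = ((PSetoid n L, 1) : RS n) := by
  have aux : ∀ l : List ℕ, phi n ((l.map (EM n)).prod) = ((PSetoid n l.toFinset, 1) : RS n) := by
    intro l
    induction l with
    | nil => rw [List.map_nil, List.prod_nil, map_one, List.toFinset_nil, PSetoid_empty]; rfl
    | cons c l ih =>
      rw [List.map_cons, List.prod_cons, map_mul, ih, phi_EM, RS.mul_def]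
      simp only [permSetoid_one, one_mul]
      rw [PSetoid_sup, List.toFinset_cons, Finset.insert_eq]
  rw [AM, aux, Finset.toList_toFinset]

lemma phi_ZWM (w : List ℕ) :
    phi n (ZWM n w) = ((PSetoid n w.toFinset, piW n w) : RS n) := by
  induction w with
  | nil => rw [ZWM_nil, map_one, List.toFinset_nil, PSetoid_empty]; rfl
  | cons c w ih =>
    rw [ZWM_cons, map_mul, ih, phi_ZM, RS.mul_def]
    simp only []
    rw [sigma_absorb, PSetoid_sup, List.toFinset_cons, Finset.insert_eq, ← piW_cons]

lemma phi_AM_ZWM (L : Finset ℕ) (w : List ℕ) :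
    phi n (AM n L * ZWM n w) = ((PSetoid n (L ∪ w.toFinset), piW n w) : RS n) := by
  rw [map_mul, phi_AM, phi_ZWM, RS.mul_def]
  simp only [permSetoid_one, one_mul]
  rw [PSetoid_sup]

/-! ### Word shuffling -/

lemma ZM_comm_word {c : ℕ} {w : List ℕ} (h : ∀ d ∈ w, c + 2 ≤ d ∨ d + 2 ≤ c) :
    ZM n c * ZWM n w = ZWM n w * ZM n c := by
  induction w with
  | nil => rw [ZWM_nil, one_mul, mul_one]
  | cons b w ih =>
    have hb : ZM n c * ZM n b = ZM n b * ZM n c := by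
      rcases h b (by simp) with h1 | h1
      · exact rel_zcomm h1
      · exact (rel_zcomm h1).symm
    rw [ZWM_cons, ← mul_assoc, hb, mul_assoc, ih (fun d hd => h d (by simp [hd])),
      ← mul_assoc]

lemma ZM_shuffle {m : ℕ} (hm : m + 1 < n) :
    ∀ d i j : ℕ, j < i → i ≤ m → i - 1 - j = d →
      ZM n i * ZWM n (List.range' j (m + 1 - j))
        = ZWM n (List.range' j (m + 1 - j)) * ZM n (i - 1) := by
  intro d
  induction d with
  | zero =>
    intro i j hji him hd
    have hi1 : 1 ≤ i := by omega
    rw [show j = i - 1 by omega]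
    have e1 : m + 1 - (i - 1) = (m - i + 1) + 1 := by omega
    rw [e1, List.range'_succ]
    have e2 : i - 1 + 1 = i := by omega
    rw [e2]
    have e3 : m - i + 1 = (m - i) + 1 := rfl
    rw [e3, List.range'_succ, ZWM_cons, ZWM_cons]
    have hcomm : ZM n (i - 1) * ZWM n (List.range' (i + 1) (m - i))
        = ZWM n (List.range' (i + 1) (m - i)) * ZM n (i - 1) := by
      apply ZM_comm_word
      intro e he
      rw [mem_range'_iff] at he
      omega
    have hb := rel_braid (n := n) (c := i - 1) (by omega)
    rw [e2] at hb
    calc ZM n i * (ZM n (i - 1) * (ZM n i * ZWM n (List.range' (i + 1) (m - i))))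
        = (ZM n (i - 1) * ZM n i * ZM n (i - 1)) * ZWM n (List.range' (i + 1) (m - i)) := by
          rw [hb]; simp only [mul_assoc]
      _ = ZM n (i - 1) * (ZM n i * (ZM n (i - 1) * ZWM n (List.range' (i + 1) (m - i)))) := by
          simp only [mul_assoc]
      _ = ZM n (i - 1) * (ZM n i * (ZWM n (List.range' (i + 1) (m - i)) * ZM n (i - 1))) := by
          rw [hcomm]
      _ = ZM n (i - 1) * (ZM n i * ZWM n (List.range' (i + 1) (m - i))) * ZM n (i - 1) := by
          simp only [mul_assoc]
  | succ d ih =>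
    intro i j hji him hd
    have e1 : m + 1 - j = (m - j) + 1 := by omega
    rw [e1, List.range'_succ, ZWM_cons]
    have hcomm : ZM n i * ZM n j = ZM n j * ZM n i := (rel_zcomm (by omega)).symm
    have ihh := ih i (j + 1) (by omega) him (by omega)
    have e2 : m + 1 - (j + 1) = m - j := by omega
    rw [e2] at ihh
    calc ZM n i * (ZM n j * ZWM n (List.range' (j + 1) (m - j)))
        = (ZM n i * ZM n j) * ZWM n (List.range' (j + 1) (m - j)) := by rw [mul_assoc]
      _ = ZM n j * (ZM n i * ZWM n (List.range' (j + 1) (m - j))) := by rw [hcomm, mul_assoc]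
      _ = ZM n j * (ZWM n (List.range' (j + 1) (m - j)) * ZM n (i - 1)) := by rw [ihh]
      _ = ZM n j * ZWM n (List.range' (j + 1) (m - j)) * ZM n (i - 1) := by rw [mul_assoc]

lemma rev_cancel {L : Finset ℕ} :
    ∀ t : List ℕ, (∀ c ∈ t, c ∈ L) → AM n L * (ZWM n t.reverse * ZWM n t) = AM n L := by
  intro t
  induction t with
  | nil => simp [ZWM_nil]
  | cons c t ih =>
    intro hmem
    have e1 : ZWM n [c] = ZM n c := by
      rw [show [c] = c :: ([] : List ℕ) from rfl, ZWM_cons, ZWM_nil, mul_one]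
    rw [List.reverse_cons, ZWM_append, e1, ZWM_cons]
    calc AM n L * (ZWM n t.reverse * ZM n c * (ZM n c * ZWM n t))
        = AM n L * (ZWM n t.reverse * (ZM n c * ZM n c) * ZWM n t) := by
          simp only [mul_assoc]
      _ = AM n L * (ZWM n t.reverse * EM n c * ZWM n t) := by rw [rel_zsq]
      _ = AM n L * (EM n c * (ZWM n t.reverse * ZWM n t)) := by
          rw [show ZWM n t.reverse * EM n c = EM n c * ZWM n t.reverse from
            (EM_central c _).symm]
          simp only [mul_assoc]
      _ = (AM n L * EM n c) * (ZWM n t.reverse * ZWM n t) := by rw [mul_assoc]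
      _ = (EM n c * AM n L) * (ZWM n t.reverse * ZWM n t) := by rw [AM_central]
      _ = AM n L * (ZWM n t.reverse * ZWM n t) := by rw [EM_mul_AM (hmem c (by simp))]
      _ = AM n L := ih (fun d hd => hmem d (by simp [hd]))

/-! ### Claim A : coset decomposition -/

lemma claimA {L : Finset ℕ} {m k : ℕ} (hm : m + 1 < n) (hkm : k ≤ m)
    (hrun : ∀ j, k ≤ j → j ≤ m → j ∈ L) (hmax : ∀ l ∈ L, l ≤ m)
    (hk0 : ∀ _ : 0 < k, (k - 1) ∉ L) :
    ∀ u : List ℕ, (∀ c ∈ u, c ∈ L) →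
    ∃ (j : ℕ) (w : List ℕ), k ≤ j ∧ j ≤ m + 1 ∧ (∀ c ∈ w, c ∈ L ∧ c ≠ m) ∧
      AM n L * ZWM n u = AM n L * (ZWM n (List.range' j (m + 1 - j)) * ZWM n w) := by
  intro u
  induction u with
  | nil =>
    intro _
    refine ⟨m + 1, [], by omega, le_rfl, by simp, ?_⟩
    rw [show m + 1 - (m + 1) = 0 from by omega]
    simp [ZWM_nil]
  | cons c u ihu =>
    intro hcu
    rcases ihu (fun d hd => hcu d (by simp [hd])) with ⟨j, w, hkj, hjm, hw, heq⟩
    have hcL : c ∈ L := hcu c (by simp)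
    have hcm : c ≤ m := hmax c hcL
    have step1 : AM n L * ZWM n (c :: u)
        = ZM n c * (AM n L * ZWM n u) := by
      rw [ZWM_cons, ← mul_assoc, AM_central, mul_assoc]
    rw [step1, heq]
    have recomb : ∀ y : PresentedMonoid (BRGen.Rel n),
        ZM n c * (AM n L * y) = AM n L * (ZM n c * y) := by
      intro y
      rw [← mul_assoc, ← AM_central, mul_assoc]
    rw [recomb]
    rcases lt_trichotomy (c + 1) j with hcj | hcj | hcj
    · -- c + 2 ≤ j : commute past the range block
      have hcomm : ZM n c * ZWM n (List.range' j (m + 1 - j))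
          = ZWM n (List.range' j (m + 1 - j)) * ZM n c := by
        apply ZM_comm_word
        intro d hd
        rw [mem_range'_iff] at hd
        omega
      refine ⟨j, c :: w, hkj, hjm, ?_, ?_⟩
      · intro d hd
        rcases List.mem_cons.mp hd with rfl | hd'
        · exact ⟨hcL, by omega⟩
        · exact hw d hd'
      · congr 1
        rw [← mul_assoc, hcomm, mul_assoc, ← ZWM_cons]
    · -- c + 1 = j : extend the range block
      have hkc : k ≤ c := by
        by_contra hcon
        have h1 : 0 < k := by omega
        have h2 : c = k - 1 := by omega
        exact (hk0 h1) (h2 ▸ hcL)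
      refine ⟨c, w, hkc, by omega, hw, ?_⟩
      have e1 : m + 1 - c = (m + 1 - j) + 1 := by omega
      congr 1
      rw [e1, List.range'_succ, ZWM_cons, show c + 1 = j from hcj, mul_assoc]
    · -- j ≤ c
      rcases eq_or_lt_of_le (by omega : j ≤ c) with heq | hjc
      · -- c = j : squash
        subst heq
        have e1 : m + 1 - j = (m - j) + 1 := by omega
        have e2 : m + 1 - (j + 1) = m - j := by omega
        refine ⟨j + 1, w, by omega, by omega, hw, ?_⟩
        rw [e1, e2, List.range'_succ, ZWM_cons]
        calc AM n L * (ZM n j * (ZM n j * ZWM n (List.range' (j + 1) (m - j)) * ZWM n w))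
            = AM n L * ((ZM n j * ZM n j) * (ZWM n (List.range' (j + 1) (m - j)) * ZWM n w)) := by
              simp only [mul_assoc]
          _ = AM n L * (EM n j * (ZWM n (List.range' (j + 1) (m - j)) * ZWM n w)) := by
              rw [rel_zsq]
          _ = (AM n L * EM n j) * (ZWM n (List.range' (j + 1) (m - j)) * ZWM n w) := by
              rw [mul_assoc]
          _ = (EM n j * AM n L) * (ZWM n (List.range' (j + 1) (m - j)) * ZWM n w) := by
              rw [AM_central]
          _ = AM n L * (ZWM n (List.range' (j + 1) (m - j)) * ZWM n w) := by
              rw [EM_mul_AM hcL]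
      · -- j < c : shuffle
        have hshuf := ZM_shuffle hm (c - 1 - j) c j hjc hcm rfl
        refine ⟨j, (c - 1) :: w, hkj, hjm, ?_, ?_⟩
        · intro d hd
          rcases List.mem_cons.mp hd with rfl | hd'
          · exact ⟨hrun _ (by omega) (by omega), by omega⟩
          · exact hw d hd'
        · congr 1
          rw [← mul_assoc, hshuf, mul_assoc, ← ZWM_cons]

end BRM



variable {n : ℕ}

namespace BRM

lemma keyLemma : ∀ N : ℕ, ∀ L : Finset ℕ, L.card ≤ N → (∀ l ∈ L, l + 1 < n) →
    ∀ u v : List ℕ, (∀ c ∈ u, c ∈ L) → (∀ c ∈ v, c ∈ L) → piW n u = piW n v →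
    AM n L * ZWM n u = AM n L * ZWM n v := by
  have empty_case : ∀ u : List ℕ, (∀ c ∈ u, c ∈ (∅ : Finset ℕ)) → u = [] := by
    intro u hu
    cases u with
    | nil => rfl
    | cons a u => exact absurd (hu a (by simp)) (by simp)
  intro N
  induction N with
  | zero =>
    intro L hcard hval u v hu hv hπ
    have hL : L = ∅ := Finset.card_eq_zero.mp (le_antisymm hcard (Nat.zero_le _))
    subst hL
    rw [empty_case u hu, empty_case v hv]
  | succ N ih =>
    intro L hcard hval u v hu hv hπ
    rcases Finset.eq_empty_or_nonempty L with rfl | hne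
    · rw [empty_case u hu, empty_case v hv]
    · set m := L.max' hne with hm_def
      have hmL : m ∈ L := L.max'_mem hne
      have hm : m + 1 < n := hval m hmL
      have hmax : ∀ l ∈ L, l ≤ m := fun l hl => L.le_max' l hl
      have hPex : ∃ t : ℕ, ∀ jj, t ≤ jj → jj ≤ m → jj ∈ L := by
        refine ⟨m, fun jj h1 h2 => ?_⟩
        rwa [le_antisymm h2 h1]
      set k := Nat.find hPex with hk_def
      have hk : ∀ jj, k ≤ jj → jj ≤ m → jj ∈ L := Nat.find_spec hPex
      have hkm : k ≤ m := Nat.find_le (fun jj h1 h2 => by rwa [le_antisymm h2 h1])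
      have hk0 : ∀ _ : 0 < k, (k - 1) ∉ L := by
        intro hpos hmem
        have hmin : ¬ ∀ jj, k - 1 ≤ jj → jj ≤ m → jj ∈ L :=
          Nat.find_min hPex (by omega)
        apply hmin
        intro jj h1 h2
        rcases eq_or_lt_of_le h1 with heq | hlt
        · rwa [← heq]
        · exact hk jj (by omega) h2
      obtain ⟨j1, w1, hkj1, hjm1, hw1, heq1⟩ := claimA hm hkm hk hmax hk0 u hu
      obtain ⟨j2, w2, hkj2, hjm2, hw2, heq2⟩ := claimA hm hkm hk hmax hk0 v hv
      -- extract permutation-level decompositions via φ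
      have pidec : ∀ (u' : List ℕ) (j' : ℕ) (w' : List ℕ),
          AM n L * ZWM n u' = AM n L * (ZWM n (List.range' j' (m + 1 - j')) * ZWM n w') →
          piW n u' = piW n (List.range' j' (m + 1 - j')) * piW n w' := by
        intro u' j' w' he
        rw [← ZWM_append] at he
        have := congrArg (phi n) he
        rw [phi_AM_ZWM, phi_AM_ZWM] at this
        have h2 := congrArg Prod.snd this
        simpa [piW_append] using h2
      have hπ1 := pidec u j1 w1 heq1
      have hπ2 := pidec v j2 w2 heq2
      -- the two coset representatives agree
      have fix1 : piW n w1 ⟨m + 1, hm⟩ = ⟨m + 1, hm⟩ :=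
        piW_fix_above hm (fun c hc => by
          have h1 := (hw1 c hc).1
          have h2 := (hw1 c hc).2
          have := hmax c h1
          omega)
      have fix2 : piW n w2 ⟨m + 1, hm⟩ = ⟨m + 1, hm⟩ :=
        piW_fix_above hm (fun c hc => by
          have h1 := (hw2 c hc).1
          have h2 := (hw2 c hc).2
          have := hmax c h1
          omega)
      have ev1 : piW n u ⟨m + 1, hm⟩ = ⟨j1, by omega⟩ := by
        rw [hπ1, Equiv.Perm.mul_apply, fix1]
        exact piW_range' hm (m + 1 - j1) j1 (by omega)
      have ev2 : piW n v ⟨m + 1, hm⟩ = ⟨j2, by omega⟩ := by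
        rw [hπ2, Equiv.Perm.mul_apply, fix2]
        exact piW_range' hm (m + 1 - j2) j2 (by omega)
      have hj12 : j1 = j2 := by
        have : (⟨j1, by omega⟩ : Fin n) = ⟨j2, by omega⟩ := by rw [← ev1, ← ev2, hπ]
        exact Fin.mk.injEq _ _ _ _ ▸ this
      subst hj12
      -- cancel the permutations
      have hπw : piW n w1 = piW n w2 := by
        apply mul_left_cancel (a := piW n (List.range' j1 (m + 1 - j1)))
        rw [← hπ1, ← hπ2, hπ]
      -- apply the induction hypothesis on L.erase m
      have hcard' : (L.erase m).card ≤ N := by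
        have := Finset.card_erase_of_mem hmL
        omega
      have hval' : ∀ l ∈ L.erase m, l + 1 < n := fun l hl => hval l (Finset.mem_of_mem_erase hl)
      have hw1' : ∀ c ∈ w1, c ∈ L.erase m := fun c hc =>
        Finset.mem_erase.mpr ⟨(hw1 c hc).2, (hw1 c hc).1⟩
      have hw2' : ∀ c ∈ w2, c ∈ L.erase m := fun c hc =>
        Finset.mem_erase.mpr ⟨(hw2 c hc).2, (hw2 c hc).1⟩
      have cancel0 := ih (L.erase m) hcard' hval' w1 w2 hw1' hw2' hπw
      have hAL : AM n L = EM n m * AM n (L.erase m) := by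
        rw [← AM_insert (Finset.notMem_erase m L), Finset.insert_erase hmL]
      have cancel : AM n L * ZWM n w1 = AM n L * ZWM n w2 := by
        rw [hAL, mul_assoc, mul_assoc, cancel0]
      rw [heq1, heq2]
      calc AM n L * (ZWM n (List.range' j1 (m + 1 - j1)) * ZWM n w1)
          = ZWM n (List.range' j1 (m + 1 - j1)) * (AM n L * ZWM n w1) := by
            rw [← mul_assoc, AM_central, mul_assoc]
        _ = ZWM n (List.range' j1 (m + 1 - j1)) * (AM n L * ZWM n w2) := by rw [cancel]
        _ = AM n L * (ZWM n (List.range' j1 (m + 1 - j1)) * ZWM n w2) := by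
            rw [← mul_assoc, ← AM_central, mul_assoc]

/-- Injectivity of φ. -/
lemma phi_injective : Function.Injective (phi n) := by
  intro x y hxy
  obtain ⟨L1, u, hL1, hu, rfl⟩ := normal_form x
  obtain ⟨L2, v, hL2, hv, rfl⟩ := normal_form y
  rw [phi_AM_ZWM, phi_AM_ZWM] at hxy
  have husub : L1 ∪ u.toFinset = L1 :=
    Finset.union_eq_left.mpr (fun c hc => hu c (List.mem_toFinset.mp hc))
  have hvsub : L2 ∪ v.toFinset = L2 :=
    Finset.union_eq_left.mpr (fun c hc => hv c (List.mem_toFinset.mp hc))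
  rw [husub, hvsub] at hxy
  have h1 : PSetoid n L1 = PSetoid n L2 := congrArg Prod.fst hxy
  have h2 : piW n u = piW n v := congrArg Prod.snd hxy
  have hL : L1 = L2 := PSetoid_inj hL1 hL2 h1
  subst hL
  exact keyLemma L1.card L1 le_rfl hL1 u v hu hv h2

/-- The range of φ is the boxed ramified monoid. -/
lemma phi_range : Set.range (phi n) = BRset n := by
  ext p
  constructor
  · rintro ⟨x, rfl⟩
    obtain ⟨L, w, hL, hw, rfl⟩ := normal_form x
    rw [phi_AM_ZWM]
    have hsub : L ∪ w.toFinset = L :=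
      Finset.union_eq_left.mpr (fun c hc => hw c (List.mem_toFinset.mp hc))
    rw [hsub]
    constructor
    · exact PSetoid_linear L
    · exact fixesBlocks_iff_fixes.mpr (fixes_piW hw)
  · rintro ⟨hlin, hfix⟩
    obtain ⟨I, s⟩ := p
    simp only at hlin hfix
    have hIL : I = PSetoid n (bondsOf I) := linear_eq_PSetoid hlin
    have hfix' : Fixes s (PSetoid n (bondsOf I)) := by
      rw [← hIL]
      exact fixesBlocks_iff_fixes.mp hfix
    obtain ⟨w, hw, hπ⟩ := generation (bondsOf_valid I) s hfix'
    refine ⟨AM n (bondsOf I) * ZWM n w, ?_⟩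
    rw [phi_AM_ZWM]
    have hsub : bondsOf I ∪ w.toFinset = bondsOf I :=
      Finset.union_eq_left.mpr (fun c hc => hw c (List.mem_toFinset.mp hc))
    rw [hsub, hπ, ← hIL]

end BRM


/-- the monoid presented by generators `E_i, Z_i` and the relations above
is isomorphic to the boxed ramified monoid `BR(S_n)` via `E_i ↦ e_i = (ê_i, id)` and
`Z_i ↦ z_i = (ê_i, s_i)`: there is a monoid homomorphism to `R(S_n)` with these values
on the generators which is injective and has image exactly `BR(S_n)`. -/
theorem presentedMonoid_iso_BR (n : ℕ) :
    ∃ φ : PresentedMonoid (BRGen.Rel n) →* RS n,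
      (∀ i : Fin (n - 1), φ (PresentedMonoid.of (BRGen.Rel n) (BRGen.E i)) = eElt i) ∧
      (∀ i : Fin (n - 1), φ (PresentedMonoid.of (BRGen.Rel n) (BRGen.Z i)) = zElt i) ∧
      Function.Injective φ ∧ Set.range φ = BRset n :=
  ⟨phi n, phi_E, phi_Z, BRM.phi_injective, BRM.phi_range⟩
end

section
/- For every n ≥ 3, the center of the boxed ramified monoid BR(S_n) equals C_n, i.e. Z(BR(S_n)) = {(I, id) : I a linear set partition of {1,…,n}}. -/
open scoped Classical

lemma fixesBlocks_of_rel {n : ℕ} {s : Equiv.Perm (Fin n)} {R : Setoid (Fin n)}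
    (h : ∀ x, R x (s x)) : FixesBlocks s R := by
  intro x
  ext y
  constructor
  · rintro ⟨z, hz, rfl⟩
    exact Setoid.trans' R hz (h z)
  · intro hy
    refine ⟨s.symm y, ?_, by simp⟩
    have := h (s.symm y)
    simp only [Equiv.apply_symm_apply] at this
    exact Setoid.trans' R hy (Setoid.symm' R this)

lemma rel_of_fixesBlocks {n : ℕ} {s : Equiv.Perm (Fin n)} {R : Setoid (Fin n)}
    (h : FixesBlocks s R) : ∀ x, R x (s x) := by
  intro x
  have hx : s x ∈ s '' {y | R x y} := Set.mem_image_of_mem s (Setoid.refl' R x)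
  rw [h x] at hx
  exact hx

/-- If `t` fixes blocks of `J`, then `t·I ⊔ J = I ⊔ J`. -/
lemma perm_sup_eq {n : ℕ} {t : Equiv.Perm (Fin n)} {J : Setoid (Fin n)}
    (ht : FixesBlocks t J) (I : Setoid (Fin n)) :
    permSetoid t I ⊔ J = I ⊔ J := by
  have h := rel_of_fixesBlocks ht
  have h' : ∀ x, J x (t.symm x) := by
    intro x
    have := h (t.symm x)
    simp only [Equiv.apply_symm_apply] at this
    exact Setoid.symm' J this
  apply le_antisymm (sup_le ?_ le_sup_right) (sup_le ?_ le_sup_right)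
  · intro a b hab
    have hab' : I (t.symm a) (t.symm b) := hab
    exact Setoid.trans' _ (Setoid.le_def.mp le_sup_right (h' a))
      (Setoid.trans' _ (Setoid.le_def.mp le_sup_left hab')
        (Setoid.symm' _ (Setoid.le_def.mp le_sup_right (h' b))))
  · intro a b hab
    have h1 : permSetoid t I (t a) (t b) := by
      rw [permSetoid_rel]
      simpa using hab
    exact Setoid.trans' _ (Setoid.le_def.mp le_sup_right (h a))
      (Setoid.trans' _ (Setoid.le_def.mp le_sup_left h1)
        (Setoid.symm' _ (Setoid.le_def.mp le_sup_right (h b))))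

lemma zElt_mem_BRset {n : ℕ} (i : Fin (n - 1)) : zElt i ∈ BRset n := by
  have hij : (⟨i.1, by omega⟩ : Fin n) ≠ ⟨i.1 + 1, by omega⟩ := by
    simp [Fin.ext_iff]
  refine ⟨?_, ?_⟩ <;> simp only [zElt]
  · -- linearity
    intro x y z hxy hyz hxz
    rcases hxz with h1 | ⟨h1, h2⟩ | ⟨h1, h2⟩
    · left
      exact le_antisymm hxy (h1 ▸ hyz)
    · -- x = i, z = i+1
      subst h1; subst h2
      rw [Fin.le_def] at hxy hyz
      simp only at hxy hyz
      have : y.1 = i.1 ∨ y.1 = i.1 + 1 := by omega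
      rcases this with hy | hy
      · left; exact (Fin.ext hy.symm)
      · right; left; exact ⟨rfl, Fin.ext hy⟩
    · subst h1; subst h2
      rw [Fin.le_def] at hxy hyz
      simp only at hxy hyz
      omega
  · -- swap fixes blocks
    apply fixesBlocks_of_rel
    intro x
    by_cases hx : x = (⟨i.1, by omega⟩ : Fin n)
    · subst hx
      rw [Equiv.swap_apply_left]
      exact Or.inr (Or.inl ⟨rfl, rfl⟩)
    · by_cases hx' : x = (⟨i.1 + 1, by omega⟩ : Fin n)
      · subst hx'
        rw [Equiv.swap_apply_right]
        exact Or.inr (Or.inr ⟨rfl, rfl⟩)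
      · rw [Equiv.swap_apply_of_ne_of_ne hx hx']

set_option maxHeartbeats 1000000 in
/-- for every `n ≥ 3`, the center of the boxed ramified monoid
`BR(S_n)` (the set of elements of `BR(S_n)` commuting with every element of
`BR(S_n)`) equals `C_n = {(I, id) : I linear}`. -/
theorem center_BRset (n : ℕ) (hn : 3 ≤ n) :
    {p : RS n | p ∈ BRset n ∧ ∀ q ∈ BRset n, p * q = q * p}
      = {p : RS n | IsLinear p.1 ∧ p.2 = 1} := by
  ext p
  simp only [Set.mem_setOf_eq]
  constructor
  · rintro ⟨⟨hlin, _hfix⟩, hc⟩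
    refine ⟨hlin, ?_⟩
    set s := p.2 with hs
    -- s commutes with all adjacent transpositions
    have hcomm : ∀ i : Fin (n - 1),
        s * Equiv.swap (⟨i.1, by omega⟩ : Fin n) ⟨i.1 + 1, by omega⟩
          = Equiv.swap (⟨i.1, by omega⟩ : Fin n) ⟨i.1 + 1, by omega⟩ * s := by
      intro i
      have := hc (zElt i) (zElt_mem_BRset i)
      have h2 := congrArg Prod.snd this
      simpa [RS.mul_def, zElt] using h2
    have happ : ∀ (i : Fin (n - 1)) (x : Fin n),
        s (Equiv.swap (⟨i.1, by omega⟩ : Fin n) ⟨i.1 + 1, by omega⟩ x)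
          = Equiv.swap (⟨i.1, by omega⟩ : Fin n) ⟨i.1 + 1, by omega⟩ (s x) := by
      intro i x
      have := congrArg (fun (e : Equiv.Perm (Fin n)) => e x) (hcomm i)
      simpa using this
    have key : ∀ (k : ℕ) (hk : k + 1 < n),
        (s ⟨k, by omega⟩ = ⟨k, by omega⟩ ∧ s ⟨k + 1, hk⟩ = ⟨k + 1, hk⟩)
        ∨ (s ⟨k, by omega⟩ = ⟨k + 1, hk⟩ ∧ s ⟨k + 1, hk⟩ = ⟨k, by omega⟩) := by
      intro k hk
      have hk' : k < n - 1 := by omega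
      have h1 : s (Equiv.swap (⟨k, by omega⟩ : Fin n) ⟨k + 1, hk⟩ ⟨k, by omega⟩)
          = Equiv.swap (⟨k, by omega⟩ : Fin n) ⟨k + 1, hk⟩ (s ⟨k, by omega⟩) :=
        happ ⟨k, hk'⟩ ⟨k, by omega⟩
      rw [Equiv.swap_apply_left] at h1
      by_cases ha : s ⟨k, by omega⟩ = (⟨k, by omega⟩ : Fin n)
      · left
        refine ⟨ha, ?_⟩
        rw [h1, ha, Equiv.swap_apply_left]
      · by_cases hb : s ⟨k, by omega⟩ = (⟨k + 1, hk⟩ : Fin n)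
        · right
          refine ⟨hb, ?_⟩
          rw [h1, hb, Equiv.swap_apply_right]
        · exfalso
          rw [Equiv.swap_apply_of_ne_of_ne ha hb] at h1
          have := s.injective h1
          simp [Fin.ext_iff] at this
    -- base case: s 0 = 0
    have base : ∀ (h0 : (0 : ℕ) < n), s ⟨0, h0⟩ = ⟨0, h0⟩ := by
      intro h0
      rcases key 0 (by omega) with ⟨h, _⟩ | ⟨_, hb⟩
      · exact h
      · exfalso
        rcases key 1 (by omega) with ⟨h, _⟩ | ⟨h, _⟩
        · have contra := hb.symm.trans h
          have hv : (0 : ℕ) = 1 := by simpa [Fin.ext_iff] using contra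
          omega
        · have contra := hb.symm.trans h
          have hv : (0 : ℕ) = 1 + 1 := by simpa [Fin.ext_iff] using contra
          omega
    have all : ∀ k (h : k < n), s ⟨k, h⟩ = ⟨k, h⟩ := by
      intro k
      induction k with
      | zero => intro h; exact base h
      | succ k ih =>
        intro h
        rcases key k h with ⟨_, h2⟩ | ⟨h1, _⟩
        · exact h2
        · exfalso
          have hk := ih (by omega)
          have contra := hk.symm.trans h1
          have hv : k = k + 1 := by simpa [Fin.ext_iff] using contra
          omega
    apply Equiv.ext
    intro x
    have := all x.1 x.2
    simpa using this
  · rintro ⟨hlin, h2⟩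
    refine ⟨⟨hlin, ?_⟩, ?_⟩
    · rw [h2]
      intro x
      simp
    · rintro q ⟨_hq1, hq2⟩
      rw [RS.mul_def, RS.mul_def, h2, one_mul, mul_one, permSetoid_one,
        sup_comm q.1, perm_sup_eq hq2, sup_comm]
end

section
/- The singular part sR(S_n) of the ramified symmetric monoid is generated as a semigroup by the elements e_{i,j} = (π_{ij}, id) for 1 ≤ i < j ≤ n and z^r_{i,j} = (π_{ij}, s_r) for 1 ≤ i < j ≤ n and r ∈ {1,…,n−1}. -/
open scoped Classical

/-- The transposition `s_r = (r, r+1)` of `{1,…,n}`, for `r ∈ {1,…,n−1}`. -/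
def swapAdj {n : ℕ} (r : Fin (n - 1)) : Equiv.Perm (Fin n) :=
  Equiv.swap ⟨r.1, by omega⟩ ⟨r.1 + 1, by omega⟩

section AuxClosure

variable {n : ℕ}

/-- The generating set. -/
def genSet (n : ℕ) : Set (RS n) :=
  {p : RS n | ∃ i j : Fin n, i < j ∧ p = (pairSetoid i j, 1)} ∪
  {p : RS n | ∃ i j : Fin n, ∃ r : Fin (n - 1), i < j ∧ p = (pairSetoid i j, swapAdj r)}

lemma exists_pair_of_ne_bot {I : Setoid (Fin n)} (h : I ≠ ⊥) :
    ∃ i j : Fin n, i < j ∧ I i j := by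
  by_contra hc
  push_neg at hc
  apply h
  refine le_antisymm ?_ bot_le
  rw [Setoid.le_def]
  intro x y hxy
  have hxy' : x = y := by
    rcases lt_trichotomy x y with hlt | heq | hlt
    · exact absurd hxy (hc x y hlt)
    · exact heq
    · exact absurd (Setoid.symm' I hxy) (hc y x hlt)
  subst hxy'
  exact Setoid.refl' _ _

lemma pairSetoid_le {I : Setoid (Fin n)} {i j : Fin n} (h : I i j) :
    pairSetoid i j ≤ I := by
  rw [Setoid.le_def]
  intro x y hxy
  rcases hxy with rfl | ⟨rfl, rfl⟩ | ⟨rfl, rfl⟩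
  · exact Setoid.refl' _ _
  · exact h
  · exact Setoid.symm' I h

lemma pairSetoid_rel_self {i j : Fin n} : pairSetoid i j i j :=
  Or.inr (Or.inl ⟨rfl, rfl⟩)

lemma pairSetoid_ne_bot {i j : Fin n} (h : i < j) : pairSetoid i j ≠ ⊥ := by
  intro hb
  have : (⊥ : Setoid (Fin n)) i j := hb ▸ pairSetoid_rel_self
  exact absurd this h.ne

lemma permSetoid_inv_cancel (s : Equiv.Perm (Fin n)) (I : Setoid (Fin n)) :
    permSetoid s (permSetoid s⁻¹ I) = I := by
  rw [← permSetoid_mul, mul_inv_cancel, permSetoid_one]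

lemma sup_mem_closure (F : Finset (Fin n × Fin n)) (hne : F.Nonempty)
    (hlt : ∀ p ∈ F, p.1 < p.2) :
    ((F.sup fun p => pairSetoid p.1 p.2, 1) : RS n) ∈ Subsemigroup.closure (genSet n) := by
  classical
  induction F using Finset.cons_induction with
  | empty => exact absurd hne (by simp)
  | cons a s ha ih =>
    rcases s.eq_empty_or_nonempty with rfl | hs
    · simp only [Finset.sup_cons, Finset.sup_empty, sup_bot_eq]
      exact Subsemigroup.subset_closure
        (Or.inl ⟨a.1, a.2, hlt a (Finset.mem_cons_self a _), rfl⟩)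
    · have key : ((Finset.cons a s ha).sup fun p => pairSetoid p.1 p.2, (1 : Equiv.Perm (Fin n)))
          = ((pairSetoid a.1 a.2, 1) : RS n) * (s.sup fun p => pairSetoid p.1 p.2, 1) := by
        rw [RS.mul_def]
        simp only [permSetoid_one, Finset.sup_cons, mul_one]
      rw [key]
      exact Subsemigroup.mul_mem _
        (Subsemigroup.subset_closure
          (Or.inl ⟨a.1, a.2, hlt a (Finset.mem_cons_self a _), rfl⟩))
        (ih hs fun p hp => hlt p (Finset.mem_cons_of_mem hp))

lemma id_mem_closure {I : Setoid (Fin n)} (h : I ≠ ⊥) :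
    ((I, 1) : RS n) ∈ Subsemigroup.closure (genSet n) := by
  classical
  obtain ⟨i, j, hij, hrel⟩ := exists_pair_of_ne_bot h
  set F : Finset (Fin n × Fin n) :=
    Finset.univ.filter (fun p => p.1 < p.2 ∧ I p.1 p.2) with hF
  have hne : F.Nonempty := ⟨(i, j), by simp [hF, hij, hrel]⟩
  have hlt : ∀ p ∈ F, p.1 < p.2 := by
    intro p hp
    simp only [hF, Finset.mem_filter] at hp
    exact hp.2.1
  have hsup : (F.sup fun p => pairSetoid p.1 p.2) = I := by
    refine le_antisymm (Finset.sup_le fun p hp => ?_) ?_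
    · simp only [hF, Finset.mem_filter] at hp
      exact pairSetoid_le hp.2.2
    · rw [Setoid.le_def]
      intro x y hxy
      rcases lt_trichotomy x y with hlt' | rfl | hlt'
      · have hmem : (x, y) ∈ F := by simp [hF, hlt', hxy]
        exact (Finset.le_sup (f := fun p => pairSetoid p.1 p.2) hmem :
          pairSetoid x y ≤ _) pairSetoid_rel_self
      · exact Setoid.refl' _ _
      · have hmem : (y, x) ∈ F := by simp [hF, hlt', Setoid.symm' I hxy]
        exact Setoid.symm' _
          ((Finset.le_sup (f := fun p => pairSetoid p.1 p.2) hmem :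
            pairSetoid y x ≤ _) pairSetoid_rel_self)
  have := sup_mem_closure F hne hlt
  rwa [hsup] at this

lemma word_mem_closure (l : List (Fin (n - 1))) (I : Setoid (Fin n)) (h : I ≠ ⊥) :
    ((I, (l.map swapAdj).prod) : RS n) ∈ Subsemigroup.closure (genSet n) := by
  induction l generalizing I with
  | nil => simpa using id_mem_closure h
  | cons r l ih =>
    obtain ⟨i, j, hij, hrel⟩ := exists_pair_of_ne_bot h
    have hJne : permSetoid (swapAdj r)⁻¹ I ≠ ⊥ := by
      intro hb
      apply h
      rw [← permSetoid_inv_cancel (swapAdj r) I, hb, permSetoid_bot]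
    have key : ((pairSetoid i j, swapAdj r) : RS n) *
        (permSetoid (swapAdj r)⁻¹ I, (l.map swapAdj).prod)
        = (I, ((r :: l).map swapAdj).prod) := by
      rw [RS.mul_def]
      simp only [List.map_cons, List.prod_cons]
      congr 1
      rw [permSetoid_inv_cancel]
      exact sup_eq_right.mpr (pairSetoid_le hrel)
    rw [← key]
    exact Subsemigroup.mul_mem _
      (Subsemigroup.subset_closure (Or.inr ⟨i, j, r, hij, rfl⟩))
      (ih _ hJne)

lemma exists_word (m : ℕ) (s : Equiv.Perm (Fin (m + 1))) :
    ∃ l : List (Fin (m + 1 - 1)), (l.map swapAdj).prod = s := by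
  have h := Equiv.Perm.mclosure_swap_castSucc_succ m
  have hs : s ∈ Submonoid.closure
      (Set.range fun i : Fin m ↦ Equiv.swap i.castSucc i.succ) := by
    rw [h]; trivial
  obtain ⟨L, hL, hprod⟩ := Submonoid.exists_list_of_mem_closure hs
  subst hprod
  clear hs h
  induction L with
  | nil => exact ⟨[], rfl⟩
  | cons y L ih =>
    obtain ⟨l, hl⟩ := ih fun z hz => hL z (List.mem_cons_of_mem _ hz)
    obtain ⟨i, hi⟩ := hL y List.mem_cons_self
    refine ⟨(⟨i.1, by omega⟩ : Fin (m + 1 - 1)) :: l, ?_⟩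
    simp only [List.map_cons, List.prod_cons, hl]
    rw [← hi]
    congr 1

end AuxClosure

/-- the singular part `sR(S_n)` of the ramified symmetric monoid,
i.e. the set of pairs `(I,s)` with `I ≠ ⊥`, is generated as a semigroup by the
elements `e_{i,j} = (π_{ij}, id)` (`1 ≤ i < j ≤ n`) and `z^r_{i,j} = (π_{ij}, s_r)`
(`1 ≤ i < j ≤ n`, `r ∈ {1,…,n−1}`). -/
theorem closure_eq_singular_part (n : ℕ) :
    (Subsemigroup.closure
        ({p : RS n | ∃ i j : Fin n, i < j ∧ p = (pairSetoid i j, 1)} ∪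
         {p : RS n | ∃ i j : Fin n, ∃ r : Fin (n - 1), i < j ∧ p = (pairSetoid i j, swapAdj r)})
      : Set (RS n))
      = {p : RS n | p.1 ≠ ⊥} := by
  have hgen : ({p : RS n | ∃ i j : Fin n, i < j ∧ p = (pairSetoid i j, 1)} ∪
      {p : RS n | ∃ i j : Fin n, ∃ r : Fin (n - 1), i < j ∧ p = (pairSetoid i j, swapAdj r)})
      = genSet n := rfl
  rw [hgen]
  ext p
  simp only [SetLike.mem_coe, Set.mem_setOf_eq]
  constructor
  · intro hp
    -- the singular part is a subsemigroup containing the generators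
    let T : Subsemigroup (RS n) :=
      { carrier := {q : RS n | q.1 ≠ ⊥}
        mul_mem' := by
          intro a b ha _
          have : a.1 ≤ (a * b).1 := le_sup_left
          intro hb
          exact ha (le_bot_iff.mp (hb ▸ this)) }
    have hTle : Subsemigroup.closure (genSet n) ≤ T := by
      rw [Subsemigroup.closure_le]
      rintro q (⟨i, j, hij, rfl⟩ | ⟨i, j, r, hij, rfl⟩) <;>
        exact pairSetoid_ne_bot hij
    exact hTle hp
  · intro hp
    obtain ⟨I, s⟩ := p
    simp only at hp
    match n, I, s, hp with
    | 0, I, s, hp =>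
        exact absurd (Setoid.ext fun a _ => a.elim0) hp
    | m + 1, I, s, hp =>
        obtain ⟨l, hl⟩ := exists_word m s
        have := word_mem_closure l I hp
        rwa [hl] at this
end
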